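/- arXiv:1101.4036 — 8 statements merged into one kernel-verified Lean document; each statement's English description precedes it below -/
import Mathlib

section
/- Let L be a random variable on a finite set 𝓛 and Z a random variable on a finite set 𝒵, with joint probability mass function P_{LZ}. Let 𝓕 be a family of two-universal hash functions from 𝓛 to a finite set 𝓜, and let F be a random variable on 𝓕 statistically independent of (L,Z). Then for every ρ with 0 < ρ ≤ 1, E_F[ exp(ρ · I(F(L); Z)) ] ≤ 1 + |𝓜|^ρ · E[ P_{L|Z}(L|Z)^ρ ], where for a fixed function f the quantity I(f(L); Z) is the mutual information Σ_{m∈𝓜, z∈𝒵} P(f(L)=m, Z=z) · log( P(f(L)=m, Z=z) / (P(f(L)=m) · P_Z(z)) ) (with the convention 0·log(·) = 0), E_F denotes expectation over F, and E[P_{L|Z}(L|Z)^ρ] = Σ_{ℓ,z : P_Z(z)>0} P_{LZ}(ℓ,z) · (P_{LZ}(ℓ,z)/P_Z(z))^ρ. -/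
open scoped BigOperators

lemma jensen_exp {ι : Type*} (t : Finset ι) (w x : ι → ℝ)
    (hw : ∀ i ∈ t, 0 ≤ w i) (h1 : ∑ i ∈ t, w i = 1) :
    Real.exp (∑ i ∈ t, w i * x i) ≤ ∑ i ∈ t, w i * Real.exp (x i) := by
  simpa [smul_eq_mul] using
    convexOn_exp.map_sum_le hw h1 (fun i _ => Set.mem_univ (x i))

lemma jensen_log {ι : Type*} (t : Finset ι) (w x : ι → ℝ)
    (hw : ∀ i ∈ t, 0 ≤ w i) (h1 : ∑ i ∈ t, w i = 1)
    (hx : ∀ i ∈ t, 0 < x i) :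
    ∑ i ∈ t, w i * Real.log (x i) ≤ Real.log (∑ i ∈ t, w i * x i) := by
  simpa [smul_eq_mul] using
    (strictConcaveOn_log_Ioi.concaveOn).le_map_sum hw h1 (fun i hi => hx i hi)

lemma jensen_rpow {ι : Type*} {ρ : ℝ} (hρ0 : 0 ≤ ρ) (hρ1 : ρ ≤ 1)
    (t : Finset ι) (w x : ι → ℝ)
    (hw : ∀ i ∈ t, 0 ≤ w i) (h1 : ∑ i ∈ t, w i = 1)
    (hx : ∀ i ∈ t, 0 ≤ x i) :
    ∑ i ∈ t, w i * (x i) ^ ρ ≤ (∑ i ∈ t, w i * x i) ^ ρ := by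
  simpa [smul_eq_mul] using
    (Real.concaveOn_rpow hρ0 hρ1).le_map_sum hw h1 (fun i hi => hx i hi)

lemma rpow_add_le {a b ρ : ℝ} (ha : 0 ≤ a) (hb : 0 ≤ b) (hρ0 : 0 ≤ ρ) (hρ1 : ρ ≤ 1) :
    (a + b) ^ ρ ≤ a ^ ρ + b ^ ρ := by
  have h := NNReal.coe_le_coe.mpr (NNReal.rpow_add_le_add_rpow a.toNNReal b.toNNReal hρ0 hρ1)
  rw [NNReal.coe_add, NNReal.coe_rpow, NNReal.coe_rpow, NNReal.coe_rpow,
    ← Real.toNNReal_add ha hb, Real.coe_toNNReal _ (add_nonneg ha hb),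
    Real.coe_toNNReal _ ha, Real.coe_toNNReal _ hb] at h
  exact h

lemma gibbs {M : Type} [Fintype M] (hM : Nonempty M) (q : M → ℝ)
    (hq0 : ∀ m, 0 ≤ q m) (hq1 : ∑ m, q m = 1) :
    0 ≤ ∑ m, q m * Real.log ((Fintype.card M : ℝ) * q m) := by
  classical
  set c : ℝ := (Fintype.card M : ℝ) with hc_def
  have hc : (0:ℝ) < c := by
    have : 0 < Fintype.card M := Fintype.card_pos
    rw [hc_def]; exact_mod_cast this
  set s : Finset M := Finset.univ.filter (fun m => 0 < q m) with hs
  have hq_out : ∀ m, m ∉ s → q m = 0 := by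
    intro m hm
    have : ¬ 0 < q m := by simpa [hs] using hm
    exact le_antisymm (not_lt.mp this) (hq0 m)
  have hq_pos : ∀ m ∈ s, 0 < q m := by intro m hm; simpa [hs] using hm
  have hsum_s : ∑ m ∈ s, q m = 1 := by
    rw [← hq1]
    exact Finset.sum_subset (Finset.filter_subset _ _)
      (fun m _ hm' => hq_out m hm')
  have key := jensen_log s q (fun m => (c * q m)⁻¹)
    (fun m hm => hq0 m) hsum_s
    (fun m hm => inv_pos.mpr (mul_pos hc (hq_pos m hm)))
  have hval : ∑ m ∈ s, q m * (c * q m)⁻¹ = (s.card : ℝ) * c⁻¹ := by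
    rw [Finset.sum_congr rfl (fun m hm => ?_), Finset.sum_const, nsmul_eq_mul]
    rw [mul_inv, ← mul_assoc, mul_comm (q m) c⁻¹, mul_assoc,
      mul_inv_cancel₀ (ne_of_gt (hq_pos m hm)), mul_one]
  have hcard : (s.card : ℝ) ≤ c := by
    rw [hc_def, ← Finset.card_univ]
    exact_mod_cast Finset.card_le_card (Finset.subset_univ s)
  have hle1 : (s.card : ℝ) * c⁻¹ ≤ 1 := by
    rw [← mul_inv_cancel₀ (ne_of_gt hc)]
    exact mul_le_mul_of_nonneg_right hcard (inv_nonneg.mpr hc.le)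
  have hlog : Real.log (∑ m ∈ s, q m * (c * q m)⁻¹) ≤ 0 := by
    rw [hval]
    exact Real.log_nonpos (by positivity) hle1
  have hre : ∑ m, q m * Real.log (c * q m)
      = -(∑ m ∈ s, q m * Real.log ((c * q m)⁻¹)) := by
    have h1 : ∑ m ∈ s, q m * Real.log (c * q m) = ∑ m, q m * Real.log (c * q m) :=
      Finset.sum_subset (Finset.filter_subset _ _) (fun m _ hm' => by simp [hq_out m hm'])
    rw [← h1, ← Finset.sum_neg_distrib]
    exact Finset.sum_congr rfl fun m hm => by rw [Real.log_inv]; ring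
  linarith

lemma claim1 {M Z : Type} [Fintype M] [Fintype Z] (hM : Nonempty M)
    (J : M → Z → ℝ) (pZ : Z → ℝ) (pM : M → ℝ)
    (hJ0 : ∀ m z, 0 ≤ J m z)
    (hJZ : ∀ m z, J m z ≤ pZ z)
    (hsum : ∀ z, ∑ m, J m z = pZ z)
    (hpZ1 : ∑ z, pZ z = 1)
    (hpM : ∀ m, pM m = ∑ z, J m z)
    (ρ : ℝ) (hρ0 : 0 < ρ) (hρ1 : ρ ≤ 1) :
    Real.exp (ρ * ∑ m, ∑ z, J m z * Real.log (J m z / (pM m * pZ z)))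
      ≤ ∑ m, ∑ z, J m z * ((Fintype.card M : ℝ) * J m z / pZ z) ^ ρ := by
  classical
  set c : ℝ := (Fintype.card M : ℝ) with hc_def
  have hc : (0:ℝ) < c := by
    have : 0 < Fintype.card M := Fintype.card_pos
    rw [hc_def]; exact_mod_cast this
  have hpM0 : ∀ m, 0 ≤ pM m := fun m => by
    rw [hpM]; exact Finset.sum_nonneg fun z _ => hJ0 m z
  have hJ_le_pM : ∀ m z, J m z ≤ pM m := fun m z => by
    rw [hpM]; exact Finset.single_le_sum (fun z _ => hJ0 m z) (Finset.mem_univ z)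
  have hpM1 : ∑ m, pM m = 1 := by
    simp only [hpM]
    rw [Finset.sum_comm]
    simpa only [hsum] using hpZ1
  -- Step A : I ≤ T
  have per : ∀ m z, J m z * Real.log (J m z / (pM m * pZ z))
      = J m z * Real.log (c * J m z / pZ z) - J m z * Real.log (c * pM m) := by
    intro m z
    rcases eq_or_lt_of_le (hJ0 m z) with h | h
    · rw [← h]; ring
    · have hpMpos : 0 < pM m := lt_of_lt_of_le h (hJ_le_pM m z)
      have hpZpos : 0 < pZ z := lt_of_lt_of_le h (hJZ m z)
      rw [Real.log_div (ne_of_gt h) (by positivity),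
        Real.log_mul (ne_of_gt hpMpos) (ne_of_gt hpZpos),
        Real.log_div (by positivity) (ne_of_gt hpZpos),
        Real.log_mul (ne_of_gt hc) (ne_of_gt h),
        Real.log_mul (ne_of_gt hc) (ne_of_gt hpMpos)]
      ring
  have hIT : ∑ m, ∑ z, J m z * Real.log (J m z / (pM m * pZ z))
      = (∑ m, ∑ z, J m z * Real.log (c * J m z / pZ z))
        - ∑ m, pM m * Real.log (c * pM m) := by
    rw [← Finset.sum_sub_distrib]
    refine Finset.sum_congr rfl fun m _ => ?_
    have hh : pM m * Real.log (c * pM m) = ∑ z, J m z * Real.log (c * pM m) := by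
      rw [← Finset.sum_mul, ← hpM]
    rw [hh, ← Finset.sum_sub_distrib]
    exact Finset.sum_congr rfl fun z _ => per m z
  have hG : 0 ≤ ∑ m, pM m * Real.log (c * pM m) := gibbs hM pM hpM0 hpM1
  have hIleT : ∑ m, ∑ z, J m z * Real.log (J m z / (pM m * pZ z))
      ≤ ∑ m, ∑ z, J m z * Real.log (c * J m z / pZ z) := by
    rw [hIT]; linarith
  -- Step B : exp (ρ T) ≤ A
  set s : Finset (M × Z) := Finset.univ.filter (fun p => 0 < J p.1 p.2) with hs
  have hJ_out : ∀ p : M × Z, p ∉ s → J p.1 p.2 = 0 := by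
    intro p hp
    have : ¬ 0 < J p.1 p.2 := by simpa [hs] using hp
    exact le_antisymm (not_lt.mp this) (hJ0 _ _)
  have hJ_pos : ∀ p ∈ s, 0 < J p.1 p.2 := by intro p hp; simpa [hs] using hp
  have hsum_s : ∑ p ∈ s, J p.1 p.2 = 1 := by
    rw [Finset.sum_subset (Finset.filter_subset _ _) (fun p _ hp' => hJ_out p hp')]
    rw [Fintype.sum_prod_type, Finset.sum_comm]
    simp only [hsum]
    exact hpZ1
  have hTs : ρ * ∑ m, ∑ z, J m z * Real.log (c * J m z / pZ z)
      = ∑ p ∈ s, J p.1 p.2 * (ρ * Real.log (c * J p.1 p.2 / pZ p.2)) := by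
    rw [Finset.sum_subset (Finset.filter_subset _ _)
      (fun p _ hp' => by rw [hJ_out p hp']; ring)]
    rw [Fintype.sum_prod_type, Finset.mul_sum]
    refine Finset.sum_congr rfl fun m _ => ?_
    rw [Finset.mul_sum]
    exact Finset.sum_congr rfl fun z _ => by ring
  have hjen := jensen_exp s (fun p => J p.1 p.2)
    (fun p => ρ * Real.log (c * J p.1 p.2 / pZ p.2))
    (fun p hp => (hJ_pos p hp).le) hsum_s
  have hexp_eq : ∀ p ∈ s, Real.exp (ρ * Real.log (c * J p.1 p.2 / pZ p.2))
      = (c * J p.1 p.2 / pZ p.2) ^ ρ := by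
    intro p hp
    have hpos : 0 < c * J p.1 p.2 / pZ p.2 :=
      div_pos (mul_pos hc (hJ_pos p hp)) (lt_of_lt_of_le (hJ_pos p hp) (hJZ _ _))
    rw [Real.rpow_def_of_pos hpos, mul_comm]
  have hfin : ∑ p ∈ s, J p.1 p.2 * Real.exp (ρ * Real.log (c * J p.1 p.2 / pZ p.2))
      = ∑ m, ∑ z, J m z * (c * J m z / pZ z) ^ ρ := by
    rw [Finset.sum_congr rfl (fun p hp => by rw [hexp_eq p hp])]
    rw [Finset.sum_subset (Finset.filter_subset _ _)
      (fun p _ hp' => by rw [hJ_out p hp']; ring)]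
    rw [Fintype.sum_prod_type]
  calc Real.exp (ρ * ∑ m, ∑ z, J m z * Real.log (J m z / (pM m * pZ z)))
      ≤ Real.exp (ρ * ∑ m, ∑ z, J m z * Real.log (c * J m z / pZ z)) :=
        Real.exp_le_exp.mpr (mul_le_mul_of_nonneg_left hIleT hρ0.le)
    _ = Real.exp (∑ p ∈ s, J p.1 p.2 * (ρ * Real.log (c * J p.1 p.2 / pZ p.2))) := by
        rw [hTs]
    _ ≤ ∑ p ∈ s, J p.1 p.2 * Real.exp (ρ * Real.log (c * J p.1 p.2 / pZ p.2)) := hjen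
    _ = ∑ m, ∑ z, J m z * (c * J m z / pZ z) ^ ρ := hfin

lemma claim2 {L Z M F : Type} [Fintype L] [Fintype Z] [Fintype M] [Fintype F]
    [DecidableEq M]
    (P : L × Z → ℝ) (hP0 : ∀ p, 0 ≤ P p) (hP1 : ∑ p, P p = 1)
    (f : F → L → M)
    (Q : F → ℝ) (hQ0 : ∀ φ, 0 ≤ Q φ) (hQ1 : ∑ φ, Q φ = 1)
    (huniv : ∀ x₁ x₂ : L, x₁ ≠ x₂ →
      ∑ φ, (if f φ x₁ = f φ x₂ then Q φ else 0) ≤ 1 / (Fintype.card M : ℝ))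
    (hM : Nonempty M)
    (ρ : ℝ) (hρ0 : 0 < ρ) (hρ1 : ρ ≤ 1) :
    ∑ φ, Q φ * ∑ m, ∑ z, (∑ ℓ, if f φ ℓ = m then P (ℓ, z) else 0) *
        ((Fintype.card M : ℝ) * (∑ ℓ, if f φ ℓ = m then P (ℓ, z) else 0) / ∑ ℓ, P (ℓ, z)) ^ ρ
      ≤ 1 + (Fintype.card M : ℝ) ^ ρ *
        ∑ ℓ, ∑ z, (if 0 < ∑ ℓ', P (ℓ', z)
          then P (ℓ, z) * (P (ℓ, z) / ∑ ℓ', P (ℓ', z)) ^ ρ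
          else 0) := by
  classical
  set c : ℝ := (Fintype.card M : ℝ) with hc_def
  have hc : (0:ℝ) < c := by
    have : 0 < Fintype.card M := Fintype.card_pos
    rw [hc_def]; exact_mod_cast this
  have hcρ : (0:ℝ) < c ^ ρ := Real.rpow_pos_of_pos hc ρ
  have hpZ0 : ∀ z : Z, 0 ≤ ∑ ℓ, P (ℓ, z) := fun z => Finset.sum_nonneg fun ℓ _ => hP0 _
  have hJ0 : ∀ (φ : F) (m : M) (z : Z), 0 ≤ ∑ ℓ, if f φ ℓ = m then P (ℓ, z) else 0 :=
    fun φ m z => Finset.sum_nonneg fun ℓ _ => by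
      split
      · exact hP0 _
      · exact le_rfl
  have hpZ1 : ∑ z, ∑ ℓ, P (ℓ, z) = 1 := by
    have h := hP1
    rw [Fintype.sum_prod_type] at h
    rw [Finset.sum_comm]
    exact h
  -- selection: sum over m of J * g m = sum over ℓ of P * g (f φ ℓ)
  have hsel : ∀ (φ : F) (z : Z) (g : M → ℝ),
      ∑ m, (∑ ℓ, if f φ ℓ = m then P (ℓ, z) else 0) * g m
        = ∑ ℓ, P (ℓ, z) * g (f φ ℓ) := by
    intro φ z g
    calc ∑ m, (∑ ℓ, if f φ ℓ = m then P (ℓ, z) else 0) * g m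
        = ∑ m, ∑ ℓ, (if f φ ℓ = m then P (ℓ, z) * g m else 0) := by
          refine Finset.sum_congr rfl fun m _ => ?_
          rw [Finset.sum_mul]
          refine Finset.sum_congr rfl fun ℓ _ => ?_
          split <;> simp
      _ = ∑ ℓ, ∑ m, (if f φ ℓ = m then P (ℓ, z) * g m else 0) := Finset.sum_comm
      _ = ∑ ℓ, P (ℓ, z) * g (f φ ℓ) := by
          refine Finset.sum_congr rfl fun ℓ _ => ?_
          simp [Finset.sum_ite_eq]
  -- rewrite LHS as ∑ z, ∑ ℓ, P * W
  have hLHS : ∑ φ, Q φ * ∑ m, ∑ z, (∑ ℓ, if f φ ℓ = m then P (ℓ, z) else 0) *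
        (c * (∑ ℓ, if f φ ℓ = m then P (ℓ, z) else 0) / ∑ ℓ, P (ℓ, z)) ^ ρ
      = ∑ z, ∑ ℓ, P (ℓ, z) *
          ∑ φ, Q φ * (c * (∑ ℓ', if f φ ℓ' = f φ ℓ then P (ℓ', z) else 0) / ∑ ℓ', P (ℓ', z)) ^ ρ := by
    have h1 : ∀ φ : F, ∑ m, ∑ z, (∑ ℓ, if f φ ℓ = m then P (ℓ, z) else 0) *
          (c * (∑ ℓ, if f φ ℓ = m then P (ℓ, z) else 0) / ∑ ℓ, P (ℓ, z)) ^ ρ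
        = ∑ z, ∑ ℓ, P (ℓ, z) *
            (c * (∑ ℓ', if f φ ℓ' = f φ ℓ then P (ℓ', z) else 0) / ∑ ℓ', P (ℓ', z)) ^ ρ := by
      intro φ
      rw [Finset.sum_comm]
      exact Finset.sum_congr rfl fun z _ => hsel φ z
        (fun m => (c * (∑ ℓ', if f φ ℓ' = m then P (ℓ', z) else 0) / ∑ ℓ', P (ℓ', z)) ^ ρ)
    simp only [h1]
    calc ∑ φ, Q φ * ∑ z, ∑ ℓ, P (ℓ, z) *
            (c * (∑ ℓ', if f φ ℓ' = f φ ℓ then P (ℓ', z) else 0) / ∑ ℓ', P (ℓ', z)) ^ ρ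
        = ∑ φ, ∑ z, ∑ ℓ, Q φ * (P (ℓ, z) *
            (c * (∑ ℓ', if f φ ℓ' = f φ ℓ then P (ℓ', z) else 0) / ∑ ℓ', P (ℓ', z)) ^ ρ) := by
          simp only [Finset.mul_sum]
      _ = ∑ z, ∑ φ, ∑ ℓ, Q φ * (P (ℓ, z) *
            (c * (∑ ℓ', if f φ ℓ' = f φ ℓ then P (ℓ', z) else 0) / ∑ ℓ', P (ℓ', z)) ^ ρ) :=
          Finset.sum_comm
      _ = ∑ z, ∑ ℓ, ∑ φ, Q φ * (P (ℓ, z) *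
            (c * (∑ ℓ', if f φ ℓ' = f φ ℓ then P (ℓ', z) else 0) / ∑ ℓ', P (ℓ', z)) ^ ρ) :=
          Finset.sum_congr rfl fun z _ => Finset.sum_comm
      _ = ∑ z, ∑ ℓ, P (ℓ, z) *
            ∑ φ, Q φ * (c * (∑ ℓ', if f φ ℓ' = f φ ℓ then P (ℓ', z) else 0) / ∑ ℓ', P (ℓ', z)) ^ ρ := by
          refine Finset.sum_congr rfl fun z _ => Finset.sum_congr rfl fun ℓ _ => ?_
          rw [Finset.mul_sum]
          exact Finset.sum_congr rfl fun φ _ => by ring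
  rw [hLHS]
  -- pointwise bound
  have hpoint : ∀ (z : Z) (ℓ : L), P (ℓ, z) *
      (∑ φ, Q φ * (c * (∑ ℓ', if f φ ℓ' = f φ ℓ then P (ℓ', z) else 0) / ∑ ℓ', P (ℓ', z)) ^ ρ)
      ≤ (if 0 < ∑ ℓ', P (ℓ', z)
          then c ^ ρ * (P (ℓ, z) * (P (ℓ, z) / ∑ ℓ', P (ℓ', z)) ^ ρ) + P (ℓ, z)
          else 0) := by
    intro z ℓ
    by_cases hz : 0 < ∑ ℓ', P (ℓ', z)
    · rw [if_pos hz]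
      have hpZρ : (0:ℝ) < (∑ ℓ', P (ℓ', z)) ^ ρ := Real.rpow_pos_of_pos hz ρ
      -- decompose J at f φ ℓ
      have hBdef : ∀ φ : F, (∑ ℓ', if f φ ℓ' = f φ ℓ then P (ℓ', z) else 0)
          = P (ℓ, z) + ∑ ℓ' ∈ Finset.univ.erase ℓ, (if f φ ℓ' = f φ ℓ then P (ℓ', z) else 0) := by
        intro φ
        rw [← Finset.add_sum_erase _ _ (Finset.mem_univ ℓ), if_pos rfl]
      set B : F → ℝ := fun φ => ∑ ℓ' ∈ Finset.univ.erase ℓ, (if f φ ℓ' = f φ ℓ then P (ℓ', z) else 0) with hB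
      have hB0 : ∀ φ, 0 ≤ B φ := fun φ => Finset.sum_nonneg fun ℓ' _ => by
        split
        · exact hP0 _
        · exact le_rfl
      have hQB : ∑ φ, Q φ * B φ ≤ (∑ ℓ', P (ℓ', z)) / c := by
        have h1 : ∑ φ, Q φ * B φ
            = ∑ ℓ' ∈ Finset.univ.erase ℓ, P (ℓ', z) * ∑ φ, (if f φ ℓ' = f φ ℓ then Q φ else 0) := by
          rw [hB]
          simp only [Finset.mul_sum]
          rw [Finset.sum_comm]
          refine Finset.sum_congr rfl fun ℓ' _ => ?_
          refine Finset.sum_congr rfl fun φ _ => ?_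
          split <;> ring
        rw [h1]
        calc ∑ ℓ' ∈ Finset.univ.erase ℓ, P (ℓ', z) * ∑ φ, (if f φ ℓ' = f φ ℓ then Q φ else 0)
            ≤ ∑ ℓ' ∈ Finset.univ.erase ℓ, P (ℓ', z) * (1 / c) := by
              refine Finset.sum_le_sum fun ℓ' hℓ' => ?_
              exact mul_le_mul_of_nonneg_left
                (huniv ℓ' ℓ (Finset.ne_of_mem_erase hℓ')) (hP0 _)
          _ ≤ ∑ ℓ', P (ℓ', z) * (1 / c) := by
              refine Finset.sum_le_sum_of_subset_of_nonneg (Finset.erase_subset _ _) ?_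
              intro ℓ' _ _
              exact mul_nonneg (hP0 _) (by positivity)
          _ = (∑ ℓ', P (ℓ', z)) / c := by rw [← Finset.sum_mul]; ring
      have hQBρ : ∑ φ, Q φ * (B φ) ^ ρ ≤ ((∑ ℓ', P (ℓ', z)) / c) ^ ρ := by
        calc ∑ φ, Q φ * (B φ) ^ ρ ≤ (∑ φ, Q φ * B φ) ^ ρ :=
              jensen_rpow hρ0.le hρ1 Finset.univ Q B (fun φ _ => hQ0 φ) hQ1 (fun φ _ => hB0 φ)
          _ ≤ ((∑ ℓ', P (ℓ', z)) / c) ^ ρ := by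
              refine Real.rpow_le_rpow ?_ hQB hρ0.le
              exact Finset.sum_nonneg fun φ _ => mul_nonneg (hQ0 φ) (hB0 φ)
      -- bound the φ-average
      have hW : ∑ φ, Q φ * (c * (∑ ℓ', if f φ ℓ' = f φ ℓ then P (ℓ', z) else 0) / ∑ ℓ', P (ℓ', z)) ^ ρ
          ≤ c ^ ρ / (∑ ℓ', P (ℓ', z)) ^ ρ * (P (ℓ, z) ^ ρ + ((∑ ℓ', P (ℓ', z)) / c) ^ ρ) := by
        have hterm : ∀ φ : F,
            (c * (∑ ℓ', if f φ ℓ' = f φ ℓ then P (ℓ', z) else 0) / ∑ ℓ', P (ℓ', z)) ^ ρ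
            ≤ c ^ ρ / (∑ ℓ', P (ℓ', z)) ^ ρ * (P (ℓ, z) ^ ρ + (B φ) ^ ρ) := by
          intro φ
          have hJnn := hJ0 φ (f φ ℓ) z
          rw [mul_div_assoc, Real.mul_rpow hc.le (div_nonneg hJnn (hpZ0 z)),
            Real.div_rpow hJnn (hpZ0 z)]
          rw [hBdef φ]
          have hsub : (P (ℓ, z) + B φ) ^ ρ ≤ P (ℓ, z) ^ ρ + (B φ) ^ ρ :=
            rpow_add_le (hP0 _) (hB0 φ) hρ0.le hρ1
          calc c ^ ρ * ((P (ℓ, z) + B φ) ^ ρ / (∑ ℓ', P (ℓ', z)) ^ ρ)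
              ≤ c ^ ρ * ((P (ℓ, z) ^ ρ + (B φ) ^ ρ) / (∑ ℓ', P (ℓ', z)) ^ ρ) := by
                refine mul_le_mul_of_nonneg_left ?_ hcρ.le
                rw [div_eq_mul_inv, div_eq_mul_inv]
                exact mul_le_mul_of_nonneg_right hsub (inv_nonneg.mpr hpZρ.le)
            _ = c ^ ρ / (∑ ℓ', P (ℓ', z)) ^ ρ * (P (ℓ, z) ^ ρ + (B φ) ^ ρ) := by ring
        calc ∑ φ, Q φ * (c * (∑ ℓ', if f φ ℓ' = f φ ℓ then P (ℓ', z) else 0) / ∑ ℓ', P (ℓ', z)) ^ ρ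
            ≤ ∑ φ, Q φ * (c ^ ρ / (∑ ℓ', P (ℓ', z)) ^ ρ * (P (ℓ, z) ^ ρ + (B φ) ^ ρ)) := by
              refine Finset.sum_le_sum fun φ _ => ?_
              exact mul_le_mul_of_nonneg_left (hterm φ) (hQ0 φ)
          _ = c ^ ρ / (∑ ℓ', P (ℓ', z)) ^ ρ *
                ((∑ φ, Q φ) * P (ℓ, z) ^ ρ + ∑ φ, Q φ * (B φ) ^ ρ) := by
              rw [Finset.sum_mul, ← Finset.sum_add_distrib, Finset.mul_sum]
              exact Finset.sum_congr rfl fun φ _ => by ring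
          _ ≤ c ^ ρ / (∑ ℓ', P (ℓ', z)) ^ ρ * (P (ℓ, z) ^ ρ + ((∑ ℓ', P (ℓ', z)) / c) ^ ρ) := by
              refine mul_le_mul_of_nonneg_left ?_ (by positivity)
              rw [hQ1, one_mul]
              exact add_le_add_right hQBρ _
      -- combine
      have hPW := mul_le_mul_of_nonneg_left hW (hP0 (ℓ, z))
      refine le_trans hPW (le_of_eq ?_)
      rw [Real.div_rpow (hpZ0 z) hc.le, Real.div_rpow (hP0 (ℓ, z)) (hpZ0 z)]
      field_simp
    · rw [if_neg hz]
      have hpZz : (∑ ℓ', P (ℓ', z)) = 0 :=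
        le_antisymm (not_lt.mp hz) (hpZ0 z)
      have hPz : P (ℓ, z) = 0 := by
        have h1 : P (ℓ, z) ≤ ∑ ℓ', P (ℓ', z) :=
          Finset.single_le_sum (fun ℓ' _ => hP0 (ℓ', z)) (Finset.mem_univ ℓ)
        exact le_antisymm (hpZz ▸ h1) (hP0 _)
      rw [hPz, zero_mul]
  -- sum the pointwise bound
  have hPsum : ∀ z : Z, ∑ ℓ, (if 0 < ∑ ℓ', P (ℓ', z) then P (ℓ, z) else 0)
      = ∑ ℓ, P (ℓ, z) := by
    intro z
    by_cases h : 0 < ∑ ℓ', P (ℓ', z)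
    · simp [h]
    · simp only [h, if_false]
      rw [Finset.sum_const_zero]
      exact (le_antisymm (not_lt.mp h) (hpZ0 z)).symm
  calc ∑ z, ∑ ℓ, P (ℓ, z) *
        ∑ φ, Q φ * (c * (∑ ℓ', if f φ ℓ' = f φ ℓ then P (ℓ', z) else 0) / ∑ ℓ', P (ℓ', z)) ^ ρ
      ≤ ∑ z, ∑ ℓ, (if 0 < ∑ ℓ', P (ℓ', z)
          then c ^ ρ * (P (ℓ, z) * (P (ℓ, z) / ∑ ℓ', P (ℓ', z)) ^ ρ) + P (ℓ, z)
          else 0) :=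
        Finset.sum_le_sum fun z _ => Finset.sum_le_sum fun ℓ _ => hpoint z ℓ
    _ = (∑ z, ∑ ℓ, (if 0 < ∑ ℓ', P (ℓ', z)
            then c ^ ρ * (P (ℓ, z) * (P (ℓ, z) / ∑ ℓ', P (ℓ', z)) ^ ρ) else 0))
        + ∑ z, ∑ ℓ, (if 0 < ∑ ℓ', P (ℓ', z) then P (ℓ, z) else 0) := by
        rw [← Finset.sum_add_distrib]
        refine Finset.sum_congr rfl fun z _ => ?_
        rw [← Finset.sum_add_distrib]
        refine Finset.sum_congr rfl fun ℓ _ => ?_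
        split <;> simp
    _ = c ^ ρ * (∑ ℓ, ∑ z, (if 0 < ∑ ℓ', P (ℓ', z)
            then P (ℓ, z) * (P (ℓ, z) / ∑ ℓ', P (ℓ', z)) ^ ρ else 0)) + 1 := by
        congr 1
        · rw [Finset.sum_comm, Finset.mul_sum]
          refine Finset.sum_congr rfl fun ℓ _ => ?_
          rw [Finset.mul_sum]
          refine Finset.sum_congr rfl fun z _ => ?_
          split <;> simp
        · simp only [hPsum]
          exact hpZ1
    _ = 1 + c ^ ρ * ∑ ℓ, ∑ z, (if 0 < ∑ ℓ', P (ℓ', z)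
            then P (ℓ, z) * (P (ℓ, z) / ∑ ℓ', P (ℓ', z)) ^ ρ else 0) := by
        rw [add_comm]

/-- **Strengthened privacy amplification theorem** (Theorem 2, Eq. (1)).
`L`, `Z`, `M` are finite alphabets, `P` is the joint pmf of the random
variables `L` and `Z`, and `(f, Q)` is a family of two-universal hash
functions from `L` to `M` (with `Q` the pmf of the random choice `F`,
statistically independent of `(L, Z)`).  Then for `0 < ρ ≤ 1`,
`E_F[exp(ρ I(F(L);Z))] ≤ 1 + |M|^ρ E[P_{L|Z}(L|Z)^ρ]`. -/
theorem stmt_0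
    (L Z M F : Type) [Fintype L] [Fintype Z] [Fintype M] [Fintype F]
    [DecidableEq M]
    (P : L × Z → ℝ) (hP0 : ∀ p, 0 ≤ P p) (hP1 : ∑ p, P p = 1)
    (f : F → L → M)
    (Q : F → ℝ) (hQ0 : ∀ φ, 0 ≤ Q φ) (hQ1 : ∑ φ, Q φ = 1)
    (huniv : ∀ x₁ x₂ : L, x₁ ≠ x₂ →
      ∑ φ, (if f φ x₁ = f φ x₂ then Q φ else 0) ≤ 1 / (Fintype.card M : ℝ))
    (ρ : ℝ) (hρ0 : 0 < ρ) (hρ1 : ρ ≤ 1) :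
    ∑ φ, Q φ *
      Real.exp (ρ * ∑ m, ∑ z,
        (∑ ℓ, if f φ ℓ = m then P (ℓ, z) else 0) *
          Real.log ((∑ ℓ, if f φ ℓ = m then P (ℓ, z) else 0) /
            ((∑ ℓ, ∑ z', if f φ ℓ = m then P (ℓ, z') else 0) *
              (∑ ℓ, P (ℓ, z)))))
    ≤ 1 + (Fintype.card M : ℝ) ^ ρ *
        ∑ ℓ, ∑ z, (if 0 < ∑ ℓ', P (ℓ', z)
          then P (ℓ, z) * (P (ℓ, z) / ∑ ℓ', P (ℓ', z)) ^ ρ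
          else 0) := by
  classical
  have hpZ0 : ∀ z : Z, 0 ≤ ∑ ℓ, P (ℓ, z) := fun z => Finset.sum_nonneg fun ℓ _ => hP0 _
  have hcnn : (0:ℝ) ≤ (Fintype.card M : ℝ) := Nat.cast_nonneg _
  have hEnn : 0 ≤ ∑ ℓ : L, ∑ z : Z, (if 0 < ∑ ℓ', P (ℓ', z)
      then P (ℓ, z) * (P (ℓ, z) / ∑ ℓ', P (ℓ', z)) ^ ρ else 0) := by
    refine Finset.sum_nonneg fun ℓ _ => Finset.sum_nonneg fun z _ => ?_
    split
    · exact mul_nonneg (hP0 _) (Real.rpow_nonneg (div_nonneg (hP0 _) (hpZ0 z)) ρ)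
    · exact le_rfl
  rcases isEmpty_or_nonempty F with hF | hF
  · rw [Finset.univ_eq_empty, Finset.sum_empty]
    have h2 : (0:ℝ) ≤ (Fintype.card M : ℝ) ^ ρ := Real.rpow_nonneg hcnn ρ
    have h3 := mul_nonneg h2 hEnn
    linarith
  obtain ⟨φ₀⟩ := hF
  have hLZ : Nonempty (L × Z) := by
    by_contra h
    rw [not_nonempty_iff] at h
    rw [Finset.univ_eq_empty, Finset.sum_empty] at hP1
    exact one_ne_zero hP1.symm
  obtain ⟨⟨ℓ₀, z₀⟩⟩ := hLZ
  have hM : Nonempty M := ⟨f φ₀ ℓ₀⟩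
  have hJ0 : ∀ (φ : F) (m : M) (z : Z), 0 ≤ ∑ ℓ, if f φ ℓ = m then P (ℓ, z) else 0 :=
    fun φ m z => Finset.sum_nonneg fun ℓ _ => by
      split
      · exact hP0 _
      · exact le_rfl
  have hJZ : ∀ (φ : F) (m : M) (z : Z),
      (∑ ℓ, if f φ ℓ = m then P (ℓ, z) else 0) ≤ ∑ ℓ, P (ℓ, z) :=
    fun φ m z => Finset.sum_le_sum fun ℓ _ => by
      split
      · exact le_rfl
      · exact hP0 _
  have hsum : ∀ (φ : F) (z : Z),
      ∑ m, (∑ ℓ, if f φ ℓ = m then P (ℓ, z) else 0) = ∑ ℓ, P (ℓ, z) := by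
    intro φ z
    rw [Finset.sum_comm]
    exact Finset.sum_congr rfl fun ℓ _ => by simp [Finset.sum_ite_eq]
  have hpZ1 : ∑ z, ∑ ℓ, P (ℓ, z) = 1 := by
    have h := hP1
    rw [Fintype.sum_prod_type] at h
    rw [Finset.sum_comm]
    exact h
  have hpM : ∀ (φ : F) (m : M),
      (∑ ℓ, ∑ z', if f φ ℓ = m then P (ℓ, z') else 0)
        = ∑ z, (∑ ℓ, if f φ ℓ = m then P (ℓ, z) else 0) := fun φ m => Finset.sum_comm
  have key1 : ∀ φ : F,
      Real.exp (ρ * ∑ m, ∑ z,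
        (∑ ℓ, if f φ ℓ = m then P (ℓ, z) else 0) *
          Real.log ((∑ ℓ, if f φ ℓ = m then P (ℓ, z) else 0) /
            ((∑ ℓ, ∑ z', if f φ ℓ = m then P (ℓ, z') else 0) *
              (∑ ℓ, P (ℓ, z)))))
      ≤ ∑ m, ∑ z, (∑ ℓ, if f φ ℓ = m then P (ℓ, z) else 0) *
          ((Fintype.card M : ℝ) * (∑ ℓ, if f φ ℓ = m then P (ℓ, z) else 0) /
            ∑ ℓ, P (ℓ, z)) ^ ρ := by
    intro φ
    exact claim1 hM
      (fun m z => ∑ ℓ, if f φ ℓ = m then P (ℓ, z) else 0)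
      (fun z => ∑ ℓ, P (ℓ, z))
      (fun m => ∑ ℓ, ∑ z', if f φ ℓ = m then P (ℓ, z') else 0)
      (hJ0 φ) (hJZ φ) (hsum φ) hpZ1 (hpM φ) ρ hρ0 hρ1
  calc ∑ φ, Q φ *
      Real.exp (ρ * ∑ m, ∑ z,
        (∑ ℓ, if f φ ℓ = m then P (ℓ, z) else 0) *
          Real.log ((∑ ℓ, if f φ ℓ = m then P (ℓ, z) else 0) /
            ((∑ ℓ, ∑ z', if f φ ℓ = m then P (ℓ, z') else 0) *
              (∑ ℓ, P (ℓ, z)))))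
      ≤ ∑ φ, Q φ * ∑ m, ∑ z, (∑ ℓ, if f φ ℓ = m then P (ℓ, z) else 0) *
          ((Fintype.card M : ℝ) * (∑ ℓ, if f φ ℓ = m then P (ℓ, z) else 0) /
            ∑ ℓ, P (ℓ, z)) ^ ρ :=
        Finset.sum_le_sum fun φ _ => mul_le_mul_of_nonneg_left (key1 φ) (hQ0 φ)
    _ ≤ 1 + (Fintype.card M : ℝ) ^ ρ *
        ∑ ℓ, ∑ z, (if 0 < ∑ ℓ', P (ℓ', z)
          then P (ℓ, z) * (P (ℓ, z) / ∑ ℓ', P (ℓ', z)) ^ ρ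
          else 0) := claim2 P hP0 hP1 f Q hQ0 hQ1 huniv hM ρ hρ0 hρ1
end

section
/- Let 𝓛 and 𝒵 be finite sets, P_L a probability mass function on 𝓛, and P_{Z|L} a conditional probability mass function from 𝓛 to 𝒵, with P_Z(z) = Σ_ℓ P_L(ℓ)P_{Z|L}(z|ℓ). Then for every ρ with 0 < ρ < 1, exp(ψ(ρ, P_{Z|L}, P_L)) ≤ exp(φ(ρ, P_{Z|L}, P_L)); that is, Σ_{z} Σ_{ℓ} P_L(ℓ) P_{Z|L}(z|ℓ)^{1+ρ} P_Z(z)^{−ρ} ≤ Σ_{z} ( Σ_{ℓ} P_L(ℓ) P_{Z|L}(z|ℓ)^{1/(1−ρ)} )^{1−ρ}, where terms with P_Z(z) = 0 on the left-hand side are taken to be 0. -/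
open scoped BigOperators

/-- Eq. (8): `exp(ψ(ρ, P_{Z|L}, P_L)) ≤ exp(φ(ρ, P_{Z|L}, P_L))` for `0 < ρ < 1`,
i.e. `∑_z ∑_ℓ P_L(ℓ) P_{Z|L}(z|ℓ)^{1+ρ} P_Z(z)^{-ρ}
      ≤ ∑_z (∑_ℓ P_L(ℓ) P_{Z|L}(z|ℓ)^{1/(1-ρ)})^{1-ρ}`. -/
theorem stmt_2
    (L Z : Type) [Fintype L] [Fintype Z]
    (PL : L → ℝ) (hPL0 : ∀ ℓ, 0 ≤ PL ℓ) (hPL1 : ∑ ℓ, PL ℓ = 1)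
    (W : L → Z → ℝ) (hW0 : ∀ ℓ z, 0 ≤ W ℓ z) (hW1 : ∀ ℓ, ∑ z, W ℓ z = 1)
    (ρ : ℝ) (hρ0 : 0 < ρ) (hρ1 : ρ < 1) :
    ∑ z, ∑ ℓ, (if 0 < ∑ ℓ', PL ℓ' * W ℓ' z
      then PL ℓ * (W ℓ z) ^ (1 + ρ) * (∑ ℓ', PL ℓ' * W ℓ' z) ^ (-ρ)
      else 0)
    ≤ ∑ z, (∑ ℓ, PL ℓ * (W ℓ z) ^ (1 / (1 - ρ))) ^ (1 - ρ) := by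
  have h1ρ : (0:ℝ) < 1 - ρ := by linarith
  refine Finset.sum_le_sum fun z _ => ?_
  by_cases h : 0 < ∑ ℓ', PL ℓ' * W ℓ' z
  · simp only [if_pos h]
    -- Hölder with exponents p = 1/(1-ρ), q = 1/ρ
    have hpq : Real.HolderConjugate (1/(1-ρ)) (1/ρ) :=
      Real.holderConjugate_one_div h1ρ hρ0 (by ring)
    have hHolder := Real.inner_le_Lp_mul_Lq_of_nonneg (Finset.univ) hpq
      (f := fun ℓ => (PL ℓ) ^ (1-ρ) * W ℓ z) (g := fun ℓ => (PL ℓ) ^ ρ * (W ℓ z) ^ ρ)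
      (fun i _ => mul_nonneg (Real.rpow_nonneg (hPL0 i) _) (hW0 i z))
      (fun i _ => mul_nonneg (Real.rpow_nonneg (hPL0 i) _) (Real.rpow_nonneg (hW0 i z) _))
    have key : ∑ ℓ, PL ℓ * (W ℓ z) ^ (1 + ρ)
        ≤ (∑ ℓ, PL ℓ * (W ℓ z) ^ (1/(1-ρ))) ^ (1 - ρ) * (∑ ℓ', PL ℓ' * W ℓ' z) ^ ρ := by
      have e1 : ∀ ℓ, ((PL ℓ) ^ (1-ρ) * W ℓ z) * ((PL ℓ) ^ ρ * (W ℓ z) ^ ρ)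
          = PL ℓ * (W ℓ z) ^ (1 + ρ) := by
        intro ℓ
        rw [show ((PL ℓ) ^ (1-ρ) * W ℓ z) * ((PL ℓ) ^ ρ * (W ℓ z) ^ ρ)
          = ((PL ℓ) ^ (1-ρ) * (PL ℓ) ^ ρ) * (W ℓ z * (W ℓ z) ^ ρ) by ring]
        rw [← Real.rpow_add' (hPL0 ℓ) (by norm_num),
          ← Real.rpow_one_add' (hW0 ℓ z) (by linarith)]
        norm_num
      have e2 : ∀ ℓ, ((PL ℓ) ^ (1-ρ) * W ℓ z) ^ (1/(1-ρ))
          = PL ℓ * (W ℓ z) ^ (1/(1-ρ)) := by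
        intro ℓ
        rw [Real.mul_rpow (Real.rpow_nonneg (hPL0 ℓ) _) (hW0 ℓ z),
          ← Real.rpow_mul (hPL0 ℓ), mul_one_div, div_self (by linarith : (1:ℝ)-ρ ≠ 0),
          Real.rpow_one]
      have e3 : ∀ ℓ, ((PL ℓ) ^ ρ * (W ℓ z) ^ ρ) ^ (1/ρ)
          = PL ℓ * W ℓ z := by
        intro ℓ
        rw [Real.mul_rpow (Real.rpow_nonneg (hPL0 ℓ) _) (Real.rpow_nonneg (hW0 ℓ z) _),
          ← Real.rpow_mul (hPL0 ℓ), ← Real.rpow_mul (hW0 ℓ z),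
          mul_one_div, div_self hρ0.ne', Real.rpow_one, Real.rpow_one]
      calc ∑ ℓ, PL ℓ * (W ℓ z) ^ (1 + ρ)
          = ∑ ℓ, ((PL ℓ) ^ (1-ρ) * W ℓ z) * ((PL ℓ) ^ ρ * (W ℓ z) ^ ρ) := by
            exact (Finset.sum_congr rfl fun ℓ _ => (e1 ℓ).symm)
        _ ≤ (∑ ℓ, ((PL ℓ) ^ (1-ρ) * W ℓ z) ^ (1/(1-ρ))) ^ (1/(1/(1-ρ)))
            * (∑ ℓ, ((PL ℓ) ^ ρ * (W ℓ z) ^ ρ) ^ (1/ρ)) ^ (1/(1/ρ)) := hHolder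
        _ = (∑ ℓ, PL ℓ * (W ℓ z) ^ (1/(1-ρ))) ^ (1 - ρ) * (∑ ℓ', PL ℓ' * W ℓ' z) ^ ρ := by
            rw [one_div_one_div, one_div_one_div]
            congr 2
            · exact Finset.sum_congr rfl fun ℓ _ => e2 ℓ
            · exact Finset.sum_congr rfl fun ℓ _ => e3 ℓ
    rw [← Finset.sum_mul]
    rw [Real.rpow_neg h.le, ← div_eq_mul_inv, div_le_iff₀ (Real.rpow_pos_of_pos h ρ)]
    exact key
  · simp only [if_neg h]
    simp only [Finset.sum_const_zero]
    exact Real.rpow_nonneg (Finset.sum_nonneg fun ℓ _ =>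
      mul_nonneg (hPL0 ℓ) (Real.rpow_nonneg (hW0 ℓ z) _)) _
end

section
/- Let 𝓛 and 𝒵 be finite sets and P_{Z|L} a fixed conditional probability mass function from 𝓛 to 𝒵, and fix ρ with 0 < ρ < 1. Then the function P_L ↦ exp(φ(ρ, P_{Z|L}, P_L)) = Σ_{z} ( Σ_{ℓ} P_L(ℓ) P_{Z|L}(z|ℓ)^{1/(1−ρ)} )^{1−ρ} is concave on the simplex of probability mass functions on 𝓛: for all probability mass functions P, Q on 𝓛 and t ∈ [0,1], exp(φ(ρ, P_{Z|L}, tP + (1−t)Q)) ≥ t·exp(φ(ρ, P_{Z|L}, P)) + (1−t)·exp(φ(ρ, P_{Z|L}, Q)). -/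
open scoped BigOperators

/-- Concavity of `P_L ↦ exp(φ(ρ, P_{Z|L}, P_L))` on the probability simplex,
for fixed `0 < ρ < 1` and fixed conditional pmf `P_{Z|L}`. -/
theorem stmt_3
    (L Z : Type) [Fintype L] [Fintype Z]
    (W : L → Z → ℝ) (hW0 : ∀ ℓ z, 0 ≤ W ℓ z) (hW1 : ∀ ℓ, ∑ z, W ℓ z = 1)
    (ρ : ℝ) (hρ0 : 0 < ρ) (hρ1 : ρ < 1)
    (P Q : L → ℝ)
    (hP0 : ∀ ℓ, 0 ≤ P ℓ) (hP1 : ∑ ℓ, P ℓ = 1)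
    (hQ0 : ∀ ℓ, 0 ≤ Q ℓ) (hQ1 : ∑ ℓ, Q ℓ = 1)
    (t : ℝ) (ht0 : 0 ≤ t) (ht1 : t ≤ 1) :
    t * (∑ z, (∑ ℓ, P ℓ * (W ℓ z) ^ (1 / (1 - ρ))) ^ (1 - ρ))
      + (1 - t) * (∑ z, (∑ ℓ, Q ℓ * (W ℓ z) ^ (1 / (1 - ρ))) ^ (1 - ρ))
    ≤ ∑ z, (∑ ℓ, (t * P ℓ + (1 - t) * Q ℓ) * (W ℓ z) ^ (1 / (1 - ρ))) ^ (1 - ρ) := by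
  have hc := Real.concaveOn_rpow (by linarith : (0:ℝ) ≤ 1 - ρ) (by linarith : (1:ℝ) - ρ ≤ 1)
  rw [Finset.mul_sum, Finset.mul_sum, ← Finset.sum_add_distrib]
  apply Finset.sum_le_sum
  intro z _
  have ha : (0:ℝ) ≤ ∑ ℓ, P ℓ * (W ℓ z) ^ (1 / (1 - ρ)) :=
    Finset.sum_nonneg fun ℓ _ => mul_nonneg (hP0 ℓ) (Real.rpow_nonneg (hW0 ℓ z) _)
  have hb : (0:ℝ) ≤ ∑ ℓ, Q ℓ * (W ℓ z) ^ (1 / (1 - ρ)) :=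
    Finset.sum_nonneg fun ℓ _ => mul_nonneg (hQ0 ℓ) (Real.rpow_nonneg (hW0 ℓ z) _)
  have key := hc.2 ha hb ht0 (by linarith : (0:ℝ) ≤ 1 - t) (by ring)
  calc t * (∑ ℓ, P ℓ * (W ℓ z) ^ (1 / (1 - ρ))) ^ (1 - ρ)
        + (1 - t) * (∑ ℓ, Q ℓ * (W ℓ z) ^ (1 / (1 - ρ))) ^ (1 - ρ)
      ≤ (t • (∑ ℓ, P ℓ * (W ℓ z) ^ (1 / (1 - ρ)))
          + (1 - t) • (∑ ℓ, Q ℓ * (W ℓ z) ^ (1 / (1 - ρ)))) ^ (1 - ρ) := key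
    _ = (∑ ℓ, (t * P ℓ + (1 - t) * Q ℓ) * (W ℓ z) ^ (1 / (1 - ρ))) ^ (1 - ρ) := by
        congr 1
        simp only [smul_eq_mul, Finset.mul_sum, ← Finset.sum_add_distrib]
        exact Finset.sum_congr rfl fun ℓ _ => by ring
end

section
/- Let 𝓛 and 𝒵 be finite sets, P_L a probability mass function on 𝓛, and P_{Z|L} a conditional probability mass function from 𝓛 to 𝒵, with P_Z(z) = Σ_ℓ P_L(ℓ)P_{Z|L}(z|ℓ). Then lim_{ρ → 0⁺} ψ(ρ, P_{Z|L}, P_L)/ρ = I(L;Z), where I(L;Z) = Σ_{ℓ,z} P_L(ℓ)P_{Z|L}(z|ℓ) · log( P_{Z|L}(z|ℓ) / P_Z(z) ) with the convention that terms with P_L(ℓ)P_{Z|L}(z|ℓ) = 0 are 0. -/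
open scoped BigOperators

/-- `lim_{ρ → 0⁺} ψ(ρ, P_{Z|L}, P_L)/ρ = I(L;Z)`, where
`ψ(ρ) = log ∑_z ∑_ℓ P_L(ℓ) P_{Z|L}(z|ℓ)^{1+ρ} P_Z(z)^{-ρ}` (terms with
`P_Z(z) = 0` taken to be `0`) and
`I(L;Z) = ∑_{ℓ,z} P_L(ℓ)P_{Z|L}(z|ℓ) log(P_{Z|L}(z|ℓ)/P_Z(z))`. -/
theorem stmt_4
    (L Z : Type) [Fintype L] [Fintype Z]
    (PL : L → ℝ) (hPL0 : ∀ ℓ, 0 ≤ PL ℓ) (hPL1 : ∑ ℓ, PL ℓ = 1)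
    (W : L → Z → ℝ) (hW0 : ∀ ℓ z, 0 ≤ W ℓ z) (hW1 : ∀ ℓ, ∑ z, W ℓ z = 1) :
    Filter.Tendsto
      (fun ρ : ℝ =>
        Real.log (∑ z, ∑ ℓ, (if 0 < ∑ ℓ', PL ℓ' * W ℓ' z
          then PL ℓ * (W ℓ z) ^ (1 + ρ) * (∑ ℓ', PL ℓ' * W ℓ' z) ^ (-ρ)
          else 0)) / ρ)
      (nhdsWithin 0 (Set.Ioi 0))
      (nhds (∑ ℓ, ∑ z, PL ℓ * W ℓ z *
        Real.log (W ℓ z / ∑ ℓ', PL ℓ' * W ℓ' z))) := by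
  classical
  set PZ : Z → ℝ := fun z => ∑ ℓ', PL ℓ' * W ℓ' z with hPZdef
  have hPZ0 : ∀ z, 0 ≤ PZ z := fun z =>
    Finset.sum_nonneg fun ℓ _ => mul_nonneg (hPL0 ℓ) (hW0 ℓ z)
  have hzero : ∀ z ℓ, ¬ 0 < PZ z → PL ℓ * W ℓ z = 0 := by
    intro z ℓ h
    have hz : PZ z = 0 := le_antisymm (not_lt.mp h) (hPZ0 z)
    have := (Finset.sum_eq_zero_iff_of_nonneg
      (fun ℓ _ => mul_nonneg (hPL0 ℓ) (hW0 ℓ z))).mp hz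
    exact this ℓ (Finset.mem_univ ℓ)
  set F : ℝ → ℝ := fun ρ => ∑ z, ∑ ℓ, (if 0 < PZ z
      then PL ℓ * (W ℓ z) ^ (1 + ρ) * (PZ z) ^ (-ρ) else 0) with hFdef
  set I : ℝ := ∑ ℓ, ∑ z, PL ℓ * W ℓ z * Real.log (W ℓ z / PZ z) with hIdef
  -- derivative of each term
  have hterm : ∀ z ℓ, HasDerivAt
      (fun ρ : ℝ => if 0 < PZ z then PL ℓ * (W ℓ z) ^ (1 + ρ) * (PZ z) ^ (-ρ) else 0)
      (PL ℓ * W ℓ z * Real.log (W ℓ z / PZ z)) 0 := by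
    intro z ℓ
    by_cases hz : 0 < PZ z
    · simp only [if_pos hz]
      rcases eq_or_lt_of_le (hW0 ℓ z) with hw | hw
      · -- W ℓ z = 0 : function eventually 0
        have hev : (fun ρ : ℝ => PL ℓ * (W ℓ z) ^ (1 + ρ) * (PZ z) ^ (-ρ)) =ᶠ[nhds (0:ℝ)]
            (fun _ => (0:ℝ)) := by
          have : ∀ᶠ ρ : ℝ in nhds 0, (1:ℝ) + ρ ≠ 0 := by
            have : Filter.Tendsto (fun ρ : ℝ => 1 + ρ) (nhds 0) (nhds 1) := by
              simpa using ((continuous_const.fun_add continuous_id : Continuous fun ρ : ℝ => 1 + ρ).tendsto (0:ℝ))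
            exact this (isOpen_ne.mem_nhds (by norm_num))
          filter_upwards [this] with ρ hρ
          rw [← hw, Real.zero_rpow hρ]
          ring
        have h0 : PL ℓ * W ℓ z * Real.log (W ℓ z / PZ z) = 0 := by
          rw [← hw]; ring
        rw [h0]
        exact (hasDerivAt_const (0:ℝ) (0:ℝ)).congr_of_eventuallyEq hev
      · -- W ℓ z > 0
        have h1 : HasDerivAt (fun ρ : ℝ => (W ℓ z) ^ (1 + ρ))
            ((W ℓ z) ^ ((1:ℝ) + 0) * Real.log (W ℓ z) * 1) 0 := by
          have := ((Real.hasStrictDerivAt_const_rpow hw ((1:ℝ) + 0)).hasDerivAt).comp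
            (0:ℝ) ((hasDerivAt_const (0:ℝ) (1:ℝ)).add (hasDerivAt_id (0:ℝ)))
          simpa [Function.comp_def] using this
        have h2 : HasDerivAt (fun ρ : ℝ => (PZ z) ^ (-ρ))
            ((PZ z) ^ (-(0:ℝ)) * Real.log (PZ z) * (-1)) 0 := by
          have := ((Real.hasStrictDerivAt_const_rpow hz (-(0:ℝ))).hasDerivAt).comp
            (0:ℝ) ((hasDerivAt_id (0:ℝ)).neg)
          simpa [Function.comp_def] using this
        have h3 := ((h1.const_mul (PL ℓ)).mul h2)
        have heq : PL ℓ * ((W ℓ z) ^ ((1:ℝ) + 0) * Real.log (W ℓ z) * 1) * (PZ z) ^ (-(0:ℝ))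
            + PL ℓ * (W ℓ z) ^ ((1:ℝ)+0) * ((PZ z) ^ (-(0:ℝ)) * Real.log (PZ z) * (-1))
            = PL ℓ * W ℓ z * Real.log (W ℓ z / PZ z) := by
          rw [Real.log_div (ne_of_gt hw) (ne_of_gt hz)]
          simp [Real.rpow_one]
          ring
        rw [← heq]
        simpa [Pi.mul_def] using h3
    · simp only [if_neg hz]
      have h0 : PL ℓ * W ℓ z * Real.log (W ℓ z / PZ z) = 0 := by
        rw [hzero z ℓ hz, zero_mul]
      rw [h0]
      exact hasDerivAt_const 0 0
  have hF : HasDerivAt F I 0 := by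
    have : HasDerivAt F (∑ z, ∑ ℓ, PL ℓ * W ℓ z * Real.log (W ℓ z / PZ z)) 0 := by
      apply HasDerivAt.fun_sum
      intro z _
      exact HasDerivAt.fun_sum fun ℓ _ => hterm z ℓ
    rwa [Finset.sum_comm] at this
  have hF0 : F 0 = 1 := by
    have : F 0 = ∑ z, PZ z := by
      apply Finset.sum_congr rfl
      intro z _
      by_cases hz : 0 < PZ z
      · simp only [if_pos hz]
        rw [hPZdef]
        apply Finset.sum_congr rfl
        intro ℓ _
        rw [add_zero, Real.rpow_one, neg_zero, Real.rpow_zero, mul_one]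
      · simp only [if_neg hz]
        have hz0 : PZ z = 0 := le_antisymm (not_lt.mp hz) (hPZ0 z)
        simp [hz0]
    rw [this, hPZdef, Finset.sum_comm]
    simp only [← Finset.mul_sum]
    simp [hW1, hPL1]
  -- log ∘ F has derivative I at 0
  have hlogF : HasDerivAt (fun ρ => Real.log (F ρ)) I 0 := by
    have := hF.log (by rw [hF0]; norm_num)
    simpa [hF0] using this
  have hslope := hasDerivAt_iff_tendsto_slope.mp hlogF
  have hsub : nhdsWithin (0:ℝ) (Set.Ioi 0) ≤ nhdsWithin 0 {(0:ℝ)}ᶜ :=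
    nhdsWithin_mono 0 fun x hx => ne_of_gt hx
  have := hslope.mono_left hsub
  refine this.congr' ?_
  filter_upwards [self_mem_nhdsWithin] with ρ (hρ : ρ ∈ Set.Ioi 0)
  have : Real.log (F 0) = 0 := by rw [hF0]; exact Real.log_one
  rw [slope_def_field, this, sub_zero, sub_zero]
end

section
/- Let 𝓛 and 𝒵 be finite sets, P_L a probability mass function on 𝓛, and P_{Z|L} a conditional probability mass function from 𝓛 to 𝒵, with P_Z(z) = Σ_ℓ P_L(ℓ)P_{Z|L}(z|ℓ). Then lim_{ρ → 0⁺} φ(ρ, P_{Z|L}, P_L)/ρ = I(L;Z), where I(L;Z) = Σ_{ℓ,z} P_L(ℓ)P_{Z|L}(z|ℓ) · log( P_{Z|L}(z|ℓ) / P_Z(z) ) with the convention that terms with P_L(ℓ)P_{Z|L}(z|ℓ) = 0 are 0. -/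
open scoped BigOperators
open Filter

/-- `lim_{ρ → 0⁺} φ(ρ, P_{Z|L}, P_L)/ρ = I(L;Z)`, where
`φ(ρ) = log ∑_z (∑_ℓ P_L(ℓ) P_{Z|L}(z|ℓ)^{1/(1-ρ)})^{1-ρ}` and
`I(L;Z) = ∑_{ℓ,z} P_L(ℓ)P_{Z|L}(z|ℓ) log(P_{Z|L}(z|ℓ)/P_Z(z))`. -/
theorem stmt_5
    (L Z : Type) [Fintype L] [Fintype Z]
    (PL : L → ℝ) (hPL0 : ∀ ℓ, 0 ≤ PL ℓ) (hPL1 : ∑ ℓ, PL ℓ = 1)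
    (W : L → Z → ℝ) (hW0 : ∀ ℓ z, 0 ≤ W ℓ z) (hW1 : ∀ ℓ, ∑ z, W ℓ z = 1) :
    Filter.Tendsto
      (fun ρ : ℝ =>
        Real.log (∑ z, (∑ ℓ, PL ℓ * (W ℓ z) ^ (1 / (1 - ρ))) ^ (1 - ρ)) / ρ)
      (nhdsWithin 0 (Set.Ioi 0))
      (nhds (∑ ℓ, ∑ z, PL ℓ * W ℓ z *
        Real.log (W ℓ z / ∑ ℓ', PL ℓ' * W ℓ' z))) := by
  set PZ : Z → ℝ := fun z => ∑ ℓ, PL ℓ * W ℓ z with hPZdef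
  set A : Z → ℝ := fun z => ∑ ℓ, PL ℓ * (W ℓ z * Real.log (W ℓ z)) with hAdef
  have hPZ0 : ∀ z, 0 ≤ PZ z := fun z =>
    Finset.sum_nonneg fun ℓ _ => mul_nonneg (hPL0 ℓ) (hW0 ℓ z)
  have hlt1 : ∀ᶠ ρ : ℝ in nhds 0, ρ < 1 := eventually_lt_nhds (by norm_num)
  have hinv : HasDerivAt (fun ρ : ℝ => 1 / (1 - ρ)) 1 0 := by
    have h1 : HasDerivAt (fun ρ : ℝ => 1 - ρ) (-1) 0 := (hasDerivAt_id 0).const_sub 1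
    have h2 := h1.fun_inv (by norm_num)
    have : -(-1) / ((1:ℝ) - 0) ^ 2 = 1 := by norm_num
    simpa [one_div, this] using h2
  have hsub : HasDerivAt (fun ρ : ℝ => 1 - ρ) (-1) 0 := (hasDerivAt_id 0).const_sub 1
  -- derivative of each inner term
  have hterm : ∀ ℓ z, HasDerivAt (fun ρ : ℝ => PL ℓ * W ℓ z ^ (1 / (1 - ρ)))
      (PL ℓ * (W ℓ z * Real.log (W ℓ z))) 0 := by
    intro ℓ z
    rcases eq_or_lt_of_le (hW0 ℓ z) with hw | hw
    · have heq : (fun ρ : ℝ => PL ℓ * W ℓ z ^ (1 / (1 - ρ))) =ᶠ[nhds (0:ℝ)]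
          fun _ => (0:ℝ) := by
        filter_upwards [hlt1] with ρ hρ
        rw [← hw, Real.zero_rpow (one_div_ne_zero (by linarith)), mul_zero]
      have h0 : HasDerivAt (fun _ : ℝ => (0:ℝ)) 0 0 := hasDerivAt_const 0 0
      have := h0.congr_of_eventuallyEq heq
      simpa [← hw] using this
    · have h := (hasDerivAt_const (0:ℝ) (W ℓ z)).rpow hinv hw
      have h' : HasDerivAt (fun ρ : ℝ => W ℓ z ^ (1 / (1 - ρ)))
          (W ℓ z * Real.log (W ℓ z)) 0 := by
        convert h using 1
        norm_num
      exact h'.const_mul (PL ℓ)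
  have hT : ∀ z, HasDerivAt (fun ρ : ℝ => ∑ ℓ, PL ℓ * W ℓ z ^ (1 / (1 - ρ))) (A z) 0 :=
    fun z => HasDerivAt.fun_sum fun ℓ _ => hterm ℓ z
  have hT0 : ∀ z, (∑ ℓ, PL ℓ * W ℓ z ^ (1 / (1 - (0:ℝ)))) = PZ z := by
    intro z
    norm_num [hPZdef]
  -- derivative of each outer term
  have hg : ∀ z, HasDerivAt
      (fun ρ : ℝ => (∑ ℓ, PL ℓ * W ℓ z ^ (1 / (1 - ρ))) ^ (1 - ρ))
      (A z - PZ z * Real.log (PZ z)) 0 := by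
    intro z
    rcases eq_or_lt_of_le (hPZ0 z) with hz | hz
    · have hwz : ∀ ℓ, PL ℓ * W ℓ z = 0 := by
        intro ℓ
        have := (Finset.sum_eq_zero_iff_of_nonneg
          (fun ℓ _ => mul_nonneg (hPL0 ℓ) (hW0 ℓ z))).mp hz.symm
        exact this ℓ (Finset.mem_univ ℓ)
      have hA0 : A z = 0 := by
        apply Finset.sum_eq_zero
        intro ℓ _
        rcases mul_eq_zero.mp (hwz ℓ) with hp | hw
        · simp [hp]
        · simp [hw]
      have heq : (fun ρ : ℝ => (∑ ℓ, PL ℓ * W ℓ z ^ (1 / (1 - ρ))) ^ (1 - ρ))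
          =ᶠ[nhds (0:ℝ)] fun _ => (0:ℝ) := by
        filter_upwards [hlt1] with ρ hρ
        have hTz : (∑ ℓ, PL ℓ * W ℓ z ^ (1 / (1 - ρ))) = 0 := by
          apply Finset.sum_eq_zero
          intro ℓ _
          rcases mul_eq_zero.mp (hwz ℓ) with hp | hw
          · simp [hp]
          · rw [hw, Real.zero_rpow (one_div_ne_zero (by linarith)), mul_zero]
        rw [hTz, Real.zero_rpow (ne_of_gt (by linarith : (0:ℝ) < 1 - ρ))]
      have h0 : HasDerivAt (fun _ : ℝ => (0:ℝ)) 0 0 := hasDerivAt_const 0 0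
      have := h0.congr_of_eventuallyEq heq
      have hval : A z - PZ z * Real.log (PZ z) = 0 := by
        rw [hA0, ← hz]; ring
      rw [hval]; exact this
    · have hpos : 0 < ∑ ℓ, PL ℓ * W ℓ z ^ (1 / (1 - (0:ℝ))) := by
        rw [hT0 z]; exact hz
      have h := (hT z).rpow hsub hpos
      convert h using 1
      rw [hT0 z]
      have e1 : (1:ℝ) - 0 = 1 := by norm_num
      rw [e1, Real.rpow_one]
      norm_num [Real.rpow_zero]
      ring
  have hS : HasDerivAt
      (fun ρ : ℝ => ∑ z, (∑ ℓ, PL ℓ * W ℓ z ^ (1 / (1 - ρ))) ^ (1 - ρ))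
      (∑ z, (A z - PZ z * Real.log (PZ z))) 0 := HasDerivAt.fun_sum fun z _ => hg z
  have hS0 : (∑ z, (∑ ℓ, PL ℓ * W ℓ z ^ (1 / (1 - (0:ℝ)))) ^ (1 - (0:ℝ))) = 1 := by
    have h1 : ∀ z, (∑ ℓ, PL ℓ * W ℓ z ^ (1 / (1 - (0:ℝ)))) ^ (1 - (0:ℝ)) = PZ z := by
      intro z
      rw [hT0 z]
      norm_num
    rw [Finset.sum_congr rfl fun z _ => h1 z]
    rw [hPZdef]
    rw [Finset.sum_comm]
    have : ∀ ℓ, (∑ z, PL ℓ * W ℓ z) = PL ℓ := by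
      intro ℓ
      rw [← Finset.mul_sum, hW1 ℓ, mul_one]
    rw [Finset.sum_congr rfl fun ℓ _ => this ℓ, hPL1]
  -- the key identity
  have hI : (∑ z, (A z - PZ z * Real.log (PZ z))) =
      ∑ ℓ, ∑ z, PL ℓ * W ℓ z * Real.log (W ℓ z / ∑ ℓ', PL ℓ' * W ℓ' z) := by
    rw [Finset.sum_comm]
    apply Finset.sum_congr rfl
    intro z _
    have key : ∀ ℓ, PL ℓ * W ℓ z * Real.log (W ℓ z / ∑ ℓ', PL ℓ' * W ℓ' z)
        = PL ℓ * (W ℓ z * Real.log (W ℓ z)) - PL ℓ * W ℓ z * Real.log (PZ z) := by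
      intro ℓ
      rcases eq_or_lt_of_le (mul_nonneg (hPL0 ℓ) (hW0 ℓ z)) with hp | hp
      · rcases mul_eq_zero.mp hp.symm with h | h <;> simp [h]
      · have hwpos : 0 < W ℓ z := by
          rcases (hW0 ℓ z).lt_or_eq with h | h
          · exact h
          · exfalso; rw [← h, mul_zero] at hp; exact lt_irrefl 0 hp
        have hzpos : 0 < PZ z := by
          have : PL ℓ * W ℓ z ≤ PZ z :=
            Finset.single_le_sum (fun ℓ' _ => mul_nonneg (hPL0 ℓ') (hW0 ℓ' z))
              (Finset.mem_univ ℓ)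
          linarith
        rw [show (∑ ℓ', PL ℓ' * W ℓ' z) = PZ z from rfl,
          Real.log_div (ne_of_gt hwpos) (ne_of_gt hzpos)]
        ring
    rw [Finset.sum_congr rfl fun ℓ _ => key ℓ, Finset.sum_sub_distrib, ← Finset.sum_mul]
  -- package the derivative
  set I : ℝ := ∑ ℓ, ∑ z, PL ℓ * W ℓ z * Real.log (W ℓ z / ∑ ℓ', PL ℓ' * W ℓ' z) with hIdef
  have hf : HasDerivAt
      (fun ρ : ℝ => Real.log (∑ z, (∑ ℓ, PL ℓ * W ℓ z ^ (1 / (1 - ρ))) ^ (1 - ρ))) I 0 := by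
    have h := hS.log (by rw [hS0]; norm_num)
    rw [hS0] at h
    simpa [hI] using h
  have hf0 : Real.log (∑ z, (∑ ℓ, PL ℓ * W ℓ z ^ (1 / (1 - (0:ℝ)))) ^ (1 - (0:ℝ))) = 0 := by
    rw [hS0, Real.log_one]
  have hslope := hasDerivAt_iff_tendsto_slope.mp hf
  have hmono : nhdsWithin (0:ℝ) (Set.Ioi 0) ≤ nhdsWithin 0 {(0:ℝ)}ᶜ :=
    nhdsWithin_mono 0 (fun x hx => ne_of_gt hx)
  have := hslope.mono_left hmono
  refine this.congr (fun ρ => ?_)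
  rw [slope_def_field, hf0, sub_zero, sub_zero]
end

section
/- Let 𝓤, 𝓥, 𝒵 be finite sets and let (U,V,Z) be random variables forming a Markov chain U → V → Z, with joint probability mass function P_{UVZ}(u,v,z) = P_U(u) P_{V|U}(v|u) P_{Z|V}(z|v). Then lim_{ρ → 0⁺} (1/ρ) · log( Σ_{u∈𝓤} P_U(u) · exp(φ(ρ, P_{Z|V}, P_{V|U=u})) ) = I(V;Z|U), where P_{V|U=u}(v) = P_{V|U}(v|u), I(V;Z|U) = Σ_{u,v,z} P_{UVZ}(u,v,z) · log( P_{Z|V}(z|v) / P_{Z|U}(z|u) ) with P_{Z|U}(z|u) = Σ_v P_{V|U}(v|u) P_{Z|V}(z|v), and terms with P_{UVZ}(u,v,z) = 0 are taken to be 0. -/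
open scoped BigOperators

lemma aux_rpow_deriv {a : ℝ} (ha : 0 ≤ a) :
    HasDerivAt (fun ρ : ℝ => a ^ (1 / (1 - ρ))) (a * Real.log a) 0 := by
  rcases ha.eq_or_lt with h | h
  · -- a = 0
    have hev : (fun ρ : ℝ => a ^ (1 / (1 - ρ))) =ᶠ[nhds (0:ℝ)] fun _ => (0:ℝ) := by
      filter_upwards [Iio_mem_nhds (show (0:ℝ) < 1 by norm_num)] with ρ hρ
      have hne : (1:ℝ) - ρ ≠ 0 := by
        simp only [Set.mem_Iio] at hρ; intro hc; linarith
      rw [← h, Real.zero_rpow (div_ne_zero one_ne_zero hne)]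
    have := (hasDerivAt_const (0:ℝ) (0:ℝ)).congr_of_eventuallyEq hev
    simpa [← h] using this
  · -- a > 0
    have h1 : HasDerivAt (fun ρ : ℝ => 1 - ρ) (-1) 0 := by
      simpa using (hasDerivAt_id (0:ℝ)).const_sub 1
    have h2 : HasDerivAt (fun ρ : ℝ => (1 - ρ)⁻¹) 1 0 := by
      have := h1.inv (by norm_num)
      simpa [Pi.inv_def] using this
    have h3 : HasDerivAt (fun ρ : ℝ => (1 - ρ)⁻¹ * Real.log a) (Real.log a) 0 := by
      simpa using h2.mul_const (Real.log a)
    have h4 : HasDerivAt (fun ρ : ℝ => Real.exp ((1 - ρ)⁻¹ * Real.log a))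
        (a * Real.log a) 0 := by
      have := h3.exp
      simpa [Real.exp_log h] using this
    refine h4.congr_of_eventuallyEq (Filter.Eventually.of_forall fun ρ => ?_)
    simp only [one_div]
    rw [Real.rpow_def_of_pos h, mul_comm]

lemma aux_g_deriv {V : Type} [Fintype V] (P : V → ℝ) (hP : ∀ v, 0 ≤ P v)
    (a : V → ℝ) (ha : ∀ v, 0 ≤ a v) :
    HasDerivAt (fun ρ : ℝ => (∑ v, P v * a v ^ (1 / (1 - ρ))) ^ (1 - ρ))
      ((∑ v, P v * (a v * Real.log (a v))) -
        (∑ v, P v * a v) * Real.log (∑ v, P v * a v)) 0 := by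
  have hS : HasDerivAt (fun ρ : ℝ => ∑ v, P v * a v ^ (1 / (1 - ρ)))
      (∑ v, P v * (a v * Real.log (a v))) 0 :=
    HasDerivAt.fun_sum fun v _ => (aux_rpow_deriv (ha v)).const_mul (P v)
  have hS0 : (∑ v, P v * a v ^ (1 / (1 - (0:ℝ)))) = ∑ v, P v * a v := by
    norm_num
  rcases (Finset.sum_nonneg fun v _ => mul_nonneg (hP v) (ha v)).eq_or_lt
      with hz | hz
  · -- sum = 0
    have hterm : ∀ v, P v * a v = 0 := fun v =>
      (Finset.sum_eq_zero_iff_of_nonneg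
        (fun v _ => mul_nonneg (hP v) (ha v))).mp hz.symm v (Finset.mem_univ v)
    have hev : (fun ρ : ℝ => (∑ v, P v * a v ^ (1 / (1 - ρ))) ^ (1 - ρ))
        =ᶠ[nhds (0:ℝ)] fun _ => (0:ℝ) := by
      filter_upwards [Iio_mem_nhds (show (0:ℝ) < 1 by norm_num)] with ρ hρ
      have hne : (1:ℝ) - ρ ≠ 0 := by
        simp only [Set.mem_Iio] at hρ; intro hc; linarith
      have hzero : ∀ v ∈ Finset.univ, P v * a v ^ (1 / (1 - ρ)) = 0 := by
        intro v _
        rcases mul_eq_zero.mp (hterm v) with h | h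
        · simp [h]
        · rw [h, Real.zero_rpow (div_ne_zero one_ne_zero hne), mul_zero]
      rw [Finset.sum_eq_zero hzero, Real.zero_rpow hne]
    have hval : (∑ v, P v * (a v * Real.log (a v))) -
        (∑ v, P v * a v) * Real.log (∑ v, P v * a v) = 0 := by
      rw [← hz, zero_mul, sub_zero]
      refine Finset.sum_eq_zero fun v _ => ?_
      rcases mul_eq_zero.mp (hterm v) with h | h
      · simp [h]
      · simp [h]
    rw [hval]
    exact (hasDerivAt_const (0:ℝ) (0:ℝ)).congr_of_eventuallyEq hev
  · -- sum > 0
    have hx : (∑ v, P v * a v ^ (1 / (1 - (0:ℝ)))) ≠ 0 := by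
      rw [hS0]; exact ne_of_gt hz
    have h1 : HasDerivAt (fun ρ : ℝ => 1 - ρ) (-1) 0 := by
      simpa using (hasDerivAt_id (0:ℝ)).const_sub 1
    have hlog := hS.log hx
    have hmul := h1.fun_mul hlog
    have hexp := hmul.exp
    have hexp' : HasDerivAt
        (fun ρ : ℝ => Real.exp ((1 - ρ) * Real.log (∑ v, P v * a v ^ (1 / (1 - ρ)))))
        ((∑ v, P v * (a v * Real.log (a v))) -
          (∑ v, P v * a v) * Real.log (∑ v, P v * a v)) 0 := by
      convert hexp using 1
      rw [hS0, sub_zero, one_mul, one_mul, Real.exp_log hz]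
      field_simp
      ring
    have hposev : ∀ᶠ ρ in nhds (0:ℝ), 0 < ∑ v, P v * a v ^ (1 / (1 - ρ)) := by
      have hpos0 : (0:ℝ) < ∑ v, P v * a v ^ (1 / (1 - (0:ℝ))) := by
        rw [hS0]; exact hz
      exact hS.continuousAt.eventually (eventually_gt_nhds hpos0)
    refine hexp'.congr_of_eventuallyEq ?_
    filter_upwards [hposev] with ρ hρ
    rw [Real.rpow_def_of_pos hρ, mul_comm]

/-- The quantity (*) in the proof of Theorem 4:
`lim_{ρ → 0⁺} (1/ρ) log(∑_u P_U(u) exp(φ(ρ, P_{Z|V}, P_{V|U=u}))) = I(V;Z|U)`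
for a Markov chain `U → V → Z`, where
`φ(ρ, P_{Z|V}, P_{V|U=u}) = log ∑_z (∑_v P_{V|U}(v|u) P_{Z|V}(z|v)^{1/(1-ρ)})^{1-ρ}`
and `I(V;Z|U) = ∑_{u,v,z} P_{UVZ}(u,v,z) log(P_{Z|V}(z|v)/P_{Z|U}(z|u))` with
`P_{Z|U}(z|u) = ∑_v P_{V|U}(v|u) P_{Z|V}(z|v)`. -/
theorem stmt_6
    (U V Z : Type) [Fintype U] [Fintype V] [Fintype Z]
    (PU : U → ℝ) (hPU0 : ∀ u, 0 ≤ PU u) (hPU1 : ∑ u, PU u = 1)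
    (PVU : U → V → ℝ) (hPVU0 : ∀ u v, 0 ≤ PVU u v) (hPVU1 : ∀ u, ∑ v, PVU u v = 1)
    (PZV : V → Z → ℝ) (hPZV0 : ∀ v z, 0 ≤ PZV v z) (hPZV1 : ∀ v, ∑ z, PZV v z = 1) :
    Filter.Tendsto
      (fun ρ : ℝ => (1 / ρ) *
        Real.log (∑ u, PU u *
          Real.exp (Real.log
            (∑ z, (∑ v, PVU u v * (PZV v z) ^ (1 / (1 - ρ))) ^ (1 - ρ)))))
      (nhdsWithin 0 (Set.Ioi 0))
      (nhds (∑ u, ∑ v, ∑ z, PU u * PVU u v * PZV v z *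
        Real.log (PZV v z / ∑ v', PVU u v' * PZV v' z))) := by
  classical
  -- derivative of T u at 0
  have hT : ∀ u, HasDerivAt
      (fun ρ : ℝ => ∑ z, (∑ v, PVU u v * PZV v z ^ (1 / (1 - ρ))) ^ (1 - ρ))
      (∑ z, ((∑ v, PVU u v * (PZV v z * Real.log (PZV v z))) -
        (∑ v, PVU u v * PZV v z) * Real.log (∑ v, PVU u v * PZV v z))) 0 :=
    fun u => HasDerivAt.fun_sum fun z _ =>
      aux_g_deriv (PVU u) (hPVU0 u) (fun v => PZV v z) (fun v => hPZV0 v z)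
  have hT0 : ∀ u,
      (∑ z, (∑ v, PVU u v * PZV v z ^ (1 / (1 - (0:ℝ)))) ^ (1 - (0:ℝ))) = 1 := by
    intro u
    have h1 : ∀ z, (∑ v, PVU u v * PZV v z ^ (1 / (1 - (0:ℝ)))) ^ (1 - (0:ℝ))
        = ∑ v, PVU u v * PZV v z := by intro z; norm_num
    rw [Finset.sum_congr rfl fun z _ => h1 z, Finset.sum_comm]
    simp_rw [← Finset.mul_sum, hPZV1, mul_one]
    exact hPVU1 u
  -- derivative of F at 0
  have hF : HasDerivAt
      (fun ρ : ℝ => ∑ u, PU u *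
        ∑ z, (∑ v, PVU u v * PZV v z ^ (1 / (1 - ρ))) ^ (1 - ρ))
      (∑ u, PU u * ∑ z, ((∑ v, PVU u v * (PZV v z * Real.log (PZV v z))) -
        (∑ v, PVU u v * PZV v z) * Real.log (∑ v, PVU u v * PZV v z))) 0 :=
    HasDerivAt.fun_sum fun u _ => (hT u).const_mul (PU u)
  have hF0 : (∑ u, PU u *
      ∑ z, (∑ v, PVU u v * PZV v z ^ (1 / (1 - (0:ℝ)))) ^ (1 - (0:ℝ))) = 1 := by
    rw [Finset.sum_congr rfl fun u _ => by rw [hT0 u, mul_one]]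
    exact hPU1
  have hlogF : HasDerivAt
      (fun ρ : ℝ => Real.log (∑ u, PU u *
        ∑ z, (∑ v, PVU u v * PZV v z ^ (1 / (1 - ρ))) ^ (1 - ρ)))
      (∑ u, PU u * ∑ z, ((∑ v, PVU u v * (PZV v z * Real.log (PZV v z))) -
        (∑ v, PVU u v * PZV v z) * Real.log (∑ v, PVU u v * PZV v z))) 0 := by
    have h := hF.log (by rw [hF0]; norm_num)
    simp only [hF0, div_one] at h
    exact h
  -- identify the limit value
  have hinner : ∀ u,
      (∑ v, ∑ z, PVU u v * PZV v z *
        Real.log (PZV v z / ∑ v', PVU u v' * PZV v' z))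
      = ∑ z, ((∑ v, PVU u v * (PZV v z * Real.log (PZV v z))) -
          (∑ v, PVU u v * PZV v z) * Real.log (∑ v, PVU u v * PZV v z)) := by
    intro u
    rw [Finset.sum_comm]
    refine Finset.sum_congr rfl fun z _ => ?_
    rw [Finset.sum_mul, ← Finset.sum_sub_distrib]
    refine Finset.sum_congr rfl fun v _ => ?_
    rcases eq_or_ne (PVU u v * PZV v z) 0 with h | h
    · rcases mul_eq_zero.mp h with h' | h' <;> simp [h']
    · have hZ : PZV v z ≠ 0 := fun hc => h (by rw [hc, mul_zero])
      have hSpos : 0 < ∑ v', PVU u v' * PZV v' z := by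
        have hle : PVU u v * PZV v z ≤ ∑ v', PVU u v' * PZV v' z :=
          Finset.single_le_sum
            (fun v' _ => mul_nonneg (hPVU0 u v') (hPZV0 v' z)) (Finset.mem_univ v)
        have h0 : 0 < PVU u v * PZV v z :=
          lt_of_le_of_ne (mul_nonneg (hPVU0 u v) (hPZV0 v z)) (Ne.symm h)
        linarith
      rw [Real.log_div hZ (ne_of_gt hSpos)]
      ring
  have hId : (∑ u, ∑ v, ∑ z, PU u * PVU u v * PZV v z *
        Real.log (PZV v z / ∑ v', PVU u v' * PZV v' z))
      = ∑ u, PU u * ∑ z, ((∑ v, PVU u v * (PZV v z * Real.log (PZV v z))) -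
        (∑ v, PVU u v * PZV v z) * Real.log (∑ v, PVU u v * PZV v z)) := by
    refine Finset.sum_congr rfl fun u _ => ?_
    rw [← hinner u, Finset.mul_sum]
    refine Finset.sum_congr rfl fun v _ => ?_
    rw [Finset.mul_sum]
    refine Finset.sum_congr rfl fun z _ => ?_
    ring
  rw [hId]
  -- positivity of T u near 0
  have hposT : ∀ᶠ ρ in nhds (0:ℝ), ∀ u,
      0 < ∑ z, (∑ v, PVU u v * PZV v z ^ (1 / (1 - ρ))) ^ (1 - ρ) := by
    rw [Filter.eventually_all]
    intro u
    have h1 : (0:ℝ) < ∑ z, (∑ v, PVU u v * PZV v z ^ (1 / (1 - (0:ℝ)))) ^ (1 - (0:ℝ)) := by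
      rw [hT0 u]; norm_num
    exact (hT u).continuousAt.eventually (eventually_gt_nhds h1)
  -- slope convergence
  have hslope := hasDerivAt_iff_tendsto_slope.mp hlogF
  have hmono : nhdsWithin (0:ℝ) (Set.Ioi 0) ≤ nhdsWithin (0:ℝ) {(0:ℝ)}ᶜ :=
    nhdsWithin_mono 0 fun x hx => by
      simp only [Set.mem_compl_iff, Set.mem_singleton_iff]
      exact ne_of_gt hx
  refine (hslope.mono_left hmono).congr' ?_
  filter_upwards [nhdsWithin_le_nhds hposT, self_mem_nhdsWithin] with ρ hρ hρ0
  have hexp : (∑ u, PU u * Real.exp (Real.log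
      (∑ z, (∑ v, PVU u v * PZV v z ^ (1 / (1 - ρ))) ^ (1 - ρ))))
      = ∑ u, PU u * ∑ z, (∑ v, PVU u v * PZV v z ^ (1 / (1 - ρ))) ^ (1 - ρ) :=
    Finset.sum_congr rfl fun u _ => by rw [Real.exp_log (hρ u)]
  rw [slope_def_field]
  beta_reduce
  rw [hF0, Real.log_one, sub_zero, sub_zero, hexp]
  ring
end

section
/- Let 𝓢₁, …, 𝓢_{T+1} be finite nonempty sets, 𝓑 = ∏_{i=1}^{T+1} 𝓢ᵢ with |𝓑| ≥ 2, and let ∅ ≠ 𝓘 ⊆ {1, …, T+1}. Let α_𝓘 : 𝓑 → ∏_{i∈𝓘} 𝓢ᵢ be the projection, and let F be uniformly distributed on the set of all permutations of 𝓑. Then {α_𝓘 ∘ F} is a family of two-universal hash functions from 𝓑 to ∏_{i∈𝓘} 𝓢ᵢ: for all x₁ ≠ x₂ ∈ 𝓑, Pr[α_𝓘(F(x₁)) = α_𝓘(F(x₂))] = ( ∏_{i∉𝓘} |𝓢ᵢ| − 1 ) / (|𝓑| − 1) ≤ 1 / ∏_{i∈𝓘} |𝓢ᵢ|. -/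
open scoped BigOperators Classical
open Finset

section aux

variable {B : Type*} [Fintype B] [DecidableEq B]

lemma natcard_eq {α : Type*} [Fintype α] (p : α → Prop) [DecidablePred p] :
    Nat.card {x // p x} = (univ.filter p).card := by
  rw [Nat.card_eq_fintype_card, Fintype.card_subtype]

/-- All fibers of `F ↦ (F x₁, F x₂)` over off-diagonal pairs have the same size. -/
lemma fiber_card (x₁ x₂ a b : B) (hx : x₁ ≠ x₂) (hab : a ≠ b) :
    Nat.card {F : Equiv.Perm B // F x₁ = a ∧ F x₂ = b}
      = Nat.card {F : Equiv.Perm B // F x₁ = x₁ ∧ F x₂ = x₂} := by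
  have hb' : Equiv.swap a x₁ b ≠ x₁ := by
    intro h
    exact hab.symm ((Equiv.swap a x₁).injective
      (h.trans (Equiv.swap_apply_left a x₁).symm))
  set g : Equiv.Perm B := (Equiv.swap a x₁).trans (Equiv.swap (Equiv.swap a x₁ b) x₂) with hg
  have hga : g a = x₁ := by
    rw [hg]
    simp only [Equiv.trans_apply, Equiv.swap_apply_left]
    exact Equiv.swap_apply_of_ne_of_ne (Ne.symm hb') hx
  have hgb : g b = x₂ := by
    rw [hg]
    simp only [Equiv.trans_apply, Equiv.swap_apply_left]
  refine Nat.card_congr ((Equiv.mulLeft g).subtypeEquiv fun F => ?_)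
  have e1 : (g * F) x₁ = g (F x₁) := rfl
  have e2 : (g * F) x₂ = g (F x₂) := rfl
  show (F x₁ = a ∧ F x₂ = b) ↔ ((g * F) x₁ = x₁ ∧ (g * F) x₂ = x₂)
  rw [e1, e2, ← hga, ← hgb, g.apply_eq_iff_eq, g.apply_eq_iff_eq]

/-- Counting permutations satisfying a condition on `(F x₁, F x₂)`. -/
lemma count_lemma (x₁ x₂ : B) (hx : x₁ ≠ x₂)
    (R : B × B → Prop) (Q : Equiv.Perm B → Prop) (hQR : ∀ F, Q F = R (F x₁, F x₂)) :
    Nat.card {F : Equiv.Perm B // Q F}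
      = Nat.card {p : B × B // p.1 ≠ p.2 ∧ R p}
        * Nat.card {F : Equiv.Perm B // F x₁ = x₁ ∧ F x₂ = x₂} := by
  classical
  rw [natcard_eq, natcard_eq, natcard_eq]
  have H : ∀ F ∈ univ.filter Q,
      (fun F : Equiv.Perm B => (F x₁, F x₂)) F ∈
        univ.filter fun p : B × B => p.1 ≠ p.2 ∧ R p := by
    intro F hF
    simp only [mem_filter, mem_univ, true_and] at hF ⊢
    exact ⟨fun h => hx (F.injective h), (hQR F ▸ hF : R (F x₁, F x₂))⟩
  rw [Finset.card_eq_sum_card_fiberwise H]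
  have hfib : ∀ p ∈ (univ.filter fun p : B × B => p.1 ≠ p.2 ∧ R p),
      ((univ.filter Q).filter fun F => (F x₁, F x₂) = p).card
        = (univ.filter fun F : Equiv.Perm B => F x₁ = x₁ ∧ F x₂ = x₂).card := by
    intro p hp
    simp only [mem_filter, mem_univ, true_and] at hp
    have hset : ((univ.filter Q).filter fun F => (F x₁, F x₂) = p)
        = univ.filter fun F : Equiv.Perm B => F x₁ = p.1 ∧ F x₂ = p.2 := by
      ext F
      simp only [mem_filter, mem_univ, true_and]
      constructor
      · rintro ⟨-, h⟩
        constructor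
        · rw [← h]
        · rw [← h]
      · rintro ⟨h1, h2⟩
        have hp2 : (F x₁, F x₂) = p := Prod.ext h1 h2
        exact ⟨by rw [hQR, hp2]; exact hp.2, hp2⟩
    rw [hset, ← natcard_eq, ← natcard_eq]
    exact fiber_card x₁ x₂ p.1 p.2 hx hp.1
  rw [Finset.sum_congr rfl hfib, Finset.sum_const, smul_eq_mul]

/-- The number of off-diagonal pairs. -/
lemma card_ne_subtype (α : Type*) [Fintype α] [DecidableEq α] :
    Nat.card {q : α × α // q.1 ≠ q.2}
      = Fintype.card α * Fintype.card α - Fintype.card α := by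
  rw [Nat.card_eq_fintype_card]
  have h1 : Fintype.card {q : α × α // q.1 = q.2} = Fintype.card α := by
    refine Fintype.card_congr ⟨fun q => q.1.1, fun v => ⟨(v, v), rfl⟩, ?_, fun v => rfl⟩
    rintro ⟨⟨v, v'⟩, h⟩
    have hv : v = v' := h
    subst hv
    rfl
  have h2 := Fintype.card_subtype_compl (p := fun q : α × α => q.1 = q.2)
  simpa [h1, Fintype.card_prod] using h2

/-- The key splitting equivalence. -/
def pairEquiv {Mt Kt : Type*} :
    {q : (Mt × Kt) × (Mt × Kt) // q.1 ≠ q.2 ∧ q.1.1 = q.2.1}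
      ≃ Mt × {q : Kt × Kt // q.1 ≠ q.2} where
  toFun q := ⟨q.1.1.1, ⟨(q.1.1.2, q.1.2.2), fun h => q.2.1 (Prod.ext q.2.2 h)⟩⟩
  invFun x := ⟨((x.1, x.2.1.1), (x.1, x.2.1.2)), by
    refine ⟨fun h => x.2.2 ?_, rfl⟩
    have := congrArg Prod.snd h
    simpa using this⟩
  left_inv q := by
    obtain ⟨⟨⟨u, v⟩, ⟨u', v'⟩⟩, hne, heq⟩ := q
    have hu : u = u' := heq
    subst hu
    rfl
  right_inv x := by
    obtain ⟨u, ⟨⟨v, v'⟩, h⟩⟩ := x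
    rfl

end aux

set_option maxHeartbeats 1000000 in
/-- Proposition 8: a uniformly random permutation `F` of `𝓑 = ∏ᵢ 𝓢ᵢ` composed
with the projection `α_𝓘` gives a family of two-universal hash functions:
for `x₁ ≠ x₂`,
`Pr[α_𝓘(F(x₁)) = α_𝓘(F(x₂))] = (∏_{i∉𝓘}|𝓢ᵢ| − 1)/(|𝓑| − 1) ≤ 1/∏_{i∈𝓘}|𝓢ᵢ|`. -/
theorem stmt_9
    (T : ℕ) (S : Fin (T + 1) → Type)
    [∀ i, Fintype (S i)] [∀ i, Nonempty (S i)]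
    (hcard : 2 ≤ Fintype.card (∀ i, S i))
    (I : Finset (Fin (T + 1))) (hI : I.Nonempty)
    (x₁ x₂ : ∀ i, S i) (hx : x₁ ≠ x₂) :
    (Nat.card {F : Equiv.Perm (∀ i, S i) // ∀ i ∈ I, F x₁ i = F x₂ i} : ℝ) /
        (Nat.card (Equiv.Perm (∀ i, S i)) : ℝ)
      = ((∏ i ∈ Iᶜ, (Fintype.card (S i) : ℝ)) - 1) /
          ((Fintype.card (∀ i, S i) : ℝ) - 1)
    ∧ ((∏ i ∈ Iᶜ, (Fintype.card (S i) : ℝ)) - 1) /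
          ((Fintype.card (∀ i, S i) : ℝ) - 1)
        ≤ 1 / ∏ i ∈ I, (Fintype.card (S i) : ℝ) := by
  classical
  set n : ℕ := Fintype.card (∀ i, S i) with hn
  set m : ℕ := Fintype.card (∀ i : {i // i ∈ I}, S i) with hm
  set k : ℕ := Fintype.card (∀ i : {i // i ∉ I}, S i) with hk
  let φ : (∀ i, S i) ≃ (∀ i : {i // i ∈ I}, S i) × (∀ i : {i // i ∉ I}, S i) :=
    Equiv.piEquivPiSubtypeProd (fun i => i ∈ I) S
  have hmk : n = m * k := by
    rw [hn, hm, hk, ← Fintype.card_prod]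
    exact Fintype.card_congr φ
  have hm1 : 1 ≤ m := Fintype.card_pos
  have hk1 : 1 ≤ k := Fintype.card_pos
  have hkprod : (∏ i ∈ Iᶜ, (Fintype.card (S i) : ℝ)) = (k : ℝ) := by
    rw [hk, Fintype.card_pi, Nat.cast_prod]
    exact Finset.prod_subtype Iᶜ (fun i => Finset.mem_compl) _
  have hmprod : (∏ i ∈ I, (Fintype.card (S i) : ℝ)) = (m : ℝ) := by
    rw [hm, Fintype.card_pi, Nat.cast_prod]
    exact Finset.prod_subtype I (fun i => Iff.rfl) _
  set c : ℕ := Nat.card {F : Equiv.Perm (∀ i, S i) // F x₁ = x₁ ∧ F x₂ = x₂} with hc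
  have hc0 : 0 < c := by
    rw [hc]
    haveI : Nonempty {F : Equiv.Perm (∀ i, S i) // F x₁ = x₁ ∧ F x₂ = x₂} :=
      ⟨⟨1, rfl, rfl⟩⟩
    exact Nat.card_pos
  -- cardinality of the admissible pairs
  have hEcard : Nat.card {p : (∀ i, S i) × (∀ i, S i) //
        p.1 ≠ p.2 ∧ ∀ i ∈ I, p.1 i = p.2 i} = m * (k * k - k) := by
    have hiff : ∀ p : (∀ i, S i) × (∀ i, S i),
        (p.1 ≠ p.2 ∧ ∀ i ∈ I, p.1 i = p.2 i) ↔
          ((φ.prodCongr φ) p).1 ≠ ((φ.prodCongr φ) p).2 ∧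
            ((φ.prodCongr φ) p).1.1 = ((φ.prodCongr φ) p).2.1 := by
      intro p
      show (p.1 ≠ p.2 ∧ ∀ i ∈ I, p.1 i = p.2 i) ↔
        (φ p.1 ≠ φ p.2 ∧ (φ p.1).1 = (φ p.2).1)
      constructor
      · rintro ⟨h1, h2⟩
        refine ⟨φ.injective.ne_iff.mpr h1, ?_⟩
        funext i
        exact h2 i i.2
      · rintro ⟨h1, h2⟩
        exact ⟨φ.injective.ne_iff.mp h1, fun i hi => congrFun h2 ⟨i, hi⟩⟩
    have e := ((φ.prodCongr φ).subtypeEquiv hiff).trans pairEquiv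
    rw [Nat.card_congr e, Nat.card_eq_fintype_card, Fintype.card_prod, ← hm]
    congr 1
    rw [← Nat.card_eq_fintype_card, card_ne_subtype, ← hk]
  -- numerator
  have hnum : Nat.card {F : Equiv.Perm (∀ i, S i) // ∀ i ∈ I, F x₁ i = F x₂ i}
      = m * (k * k - k) * c := by
    rw [count_lemma x₁ x₂ hx
        (fun p : (∀ i, S i) × (∀ i, S i) => ∀ i ∈ I, p.1 i = p.2 i)
        (fun F => ∀ i ∈ I, F x₁ i = F x₂ i) (fun F => rfl), hEcard, hc]
  -- denominator
  have hden : Nat.card (Equiv.Perm (∀ i, S i)) = (n * n - n) * c := by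
    have h := count_lemma x₁ x₂ hx (fun _ : (∀ i, S i) × (∀ i, S i) => True)
      (fun _ => True) (fun F => rfl)
    have h1 : Nat.card {F : Equiv.Perm (∀ i, S i) // True}
        = Nat.card (Equiv.Perm (∀ i, S i)) :=
      Nat.card_congr (Equiv.subtypeUnivEquiv fun _ => trivial)
    have h2 : Nat.card {p : (∀ i, S i) × (∀ i, S i) // p.1 ≠ p.2 ∧ True}
        = n * n - n := by
      rw [Nat.card_congr (Equiv.subtypeEquivRight
        (q := fun p : (∀ i, S i) × (∀ i, S i) => p.1 ≠ p.2) fun p => by simp),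
        card_ne_subtype, ← hn]
    rw [← h1, h, h2, hc]
  clear_value n m k c
  -- real arithmetic
  have hn2 : (2 : ℝ) ≤ (n : ℝ) := by exact_mod_cast hcard
  have hm1' : (1 : ℝ) ≤ (m : ℝ) := by exact_mod_cast hm1
  have hk1' : (1 : ℝ) ≤ (k : ℝ) := by exact_mod_cast hk1
  have hc0' : (0 : ℝ) < (c : ℝ) := by exact_mod_cast hc0
  have hmk' : (n : ℝ) = (m : ℝ) * (k : ℝ) := by exact_mod_cast hmk
  have hkk : k ≤ k * k := Nat.le_mul_of_pos_left k hk1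
  have hnn : n ≤ n * n := Nat.le_mul_of_pos_left n (by omega)
  have hnum' : (Nat.card {F : Equiv.Perm (∀ i, S i) // ∀ i ∈ I, F x₁ i = F x₂ i} : ℝ)
      = (m : ℝ) * ((k : ℝ) * (k : ℝ) - (k : ℝ)) * (c : ℝ) := by
    rw [hnum]
    push_cast [Nat.cast_sub hkk]
    ring
  have hden' : (Nat.card (Equiv.Perm (∀ i, S i)) : ℝ)
      = ((n : ℝ) * (n : ℝ) - (n : ℝ)) * (c : ℝ) := by
    rw [hden]
    push_cast [Nat.cast_sub hnn]
    ring
  have hnpos : (0 : ℝ) < (n : ℝ) * (n : ℝ) - (n : ℝ) := by nlinarith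
  have hd1 : ((n : ℝ) * (n : ℝ) - (n : ℝ)) * (c : ℝ) ≠ 0 :=
    ne_of_gt (mul_pos hnpos hc0')
  have hd2 : (n : ℝ) - 1 ≠ 0 := by
    intro h
    nlinarith
  rw [hkprod, hmprod, hnum', hden']
  constructor
  · rw [div_eq_div_iff hd1 (sub_ne_zero.mpr (by nlinarith)), hmk']
    ring
  · rw [div_le_div_iff₀ (by nlinarith) (by nlinarith), hmk']
    nlinarith
end

section
/- Let 𝐅_q be a finite field, let 𝓢₁, …, 𝓢_{T+1} be finite-dimensional vector spaces over 𝐅_q, and let 𝓑 = ∏_{i=1}^{T+1} 𝓢ᵢ. Fix ∅ ≠ 𝓘 ⊆ {1, …, T+1} and let α_𝓘 : 𝓑 → ∏_{i∈𝓘} 𝓢ᵢ be the projection, whose kernel is K_𝓘 = { v ∈ 𝓑 : vᵢ = 0 for all i ∈ 𝓘 }. Let 𝓛 be a subgroup of the group of bijective linear maps from 𝓑 to itself, and for v ∈ 𝓑 let O(v) = { Lv : L ∈ 𝓛 } denote its orbit. Let L be uniformly distributed on 𝓛. Then the family { α_𝓘 ∘ L : L ∈ 𝓛 } is a family of two-universal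 hash functions from 𝓑 to ∏_{i∈𝓘} 𝓢ᵢ if and only if for every v ∈ 𝓑 ∖ {0}, |O(v) ∩ K_𝓘| / |O(v)| ≤ 1 / ∏_{i∈𝓘} |𝓢ᵢ|. -/
open scoped BigOperators

open MulAction in
lemma key_count {G B : Type*} [Group G] [MulAction G B] (v : B) (K : Set B) :
    Nat.card {g : G // g • v ∈ K}
      = Nat.card ↥(orbit G v ∩ K) * Nat.card ↥(stabilizer G v) := by
  classical
  have hrep : ∀ w : ↥(orbit G v ∩ K), ∃ g : G, g • v = (w : B) := fun w =>
    MulAction.mem_orbit_iff.mp w.2.1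
  choose r hr using hrep
  have hbij : Function.Bijective
      (fun p : ↥(orbit G v ∩ K) × ↥(stabilizer G v) =>
        (⟨r p.1 * p.2.1, by
          have h2 : (p.2.1 : G) • v = v := p.2.2
          simp only [mul_smul, h2, hr p.1]
          exact p.1.2.2⟩ : {g : G // g • v ∈ K})) := by
    constructor
    · rintro ⟨w, s⟩ ⟨w', s'⟩ h
      have h' : r w * s.1 = r w' * s'.1 := congrArg Subtype.val h
      have hs2 : (s.1 : G) • v = v := s.2
      have hs2' : (s'.1 : G) • v = v := s'.2
      have hww : w = w' := by
        apply Subtype.ext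
        calc (w:B) = (r w * s.1) • v := by rw [mul_smul, hs2, hr w]
        _ = (r w' * s'.1) • v := by rw [h']
        _ = (w':B) := by rw [mul_smul, hs2', hr w']
      subst hww
      refine Prod.ext rfl (Subtype.ext ?_)
      exact mul_left_cancel h'
    · rintro ⟨g, hg⟩
      refine ⟨⟨⟨g • v, ⟨mem_orbit v g, hg⟩⟩,
        ⟨(r ⟨g • v, ⟨mem_orbit v g, hg⟩⟩)⁻¹ * g, ?_⟩⟩, ?_⟩
      · have h1 : r ⟨g • v, ⟨mem_orbit v g, hg⟩⟩ • v = g • v :=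
          hr ⟨g • v, ⟨mem_orbit v g, hg⟩⟩
        rw [mem_stabilizer_iff, mul_smul, inv_smul_eq_iff]
        exact h1.symm
      · exact Subtype.ext (by group)
  rw [← Nat.card_prod, Nat.card_congr (Equiv.ofBijective _ hbij).symm]

open MulAction in
lemma key_ratio {G B : Type*} [Group G] [Finite G] [MulAction G B]
    (v : B) (K : Set B) :
    (Nat.card {g : G // g • v ∈ K} : ℝ) / (Nat.card G : ℝ)
      = ((orbit G v ∩ K).ncard : ℝ) / ((orbit G v).ncard : ℝ) := by
  have hG : Nat.card G = Nat.card ↥(orbit G v) * Nat.card ↥(stabilizer G v) := by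
    rw [← Nat.card_prod, Nat.card_congr (orbitProdStabilizerEquivGroup G v)]
  have hs : (0 : ℝ) < Nat.card ↥(stabilizer G v) := by
    have : Nat.card ↥(stabilizer G v) ≠ 0 :=
      Nat.card_ne_zero.mpr ⟨⟨⟨1, (stabilizer G v).one_mem⟩⟩, inferInstance⟩
    positivity
  rw [key_count, hG, ← Nat.card_coe_set_eq, ← Nat.card_coe_set_eq]
  push_cast
  have ho : (0 : ℝ) < Nat.card ↥(orbit G v) := by
    have : Nat.card ↥(orbit G v) ≠ 0 :=
      Nat.card_ne_zero.mpr ⟨⟨⟨v, mem_orbit_self v⟩⟩, Set.Finite.to_subtype (Set.finite_range _)⟩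
    positivity
  have key : ∀ a s o : ℝ, 0 < s → 0 < o → a * s / (o * s) = a / o := by
    intro a s o hs ho; field_simp
  exact key _ _ _ hs ho

/-- Lemma 9: for a subgroup `𝓛` of the group of bijective linear maps on
`𝓑 = ∏ᵢ 𝓢ᵢ`, the family `{α_𝓘 ∘ L : L ∈ 𝓛}` (with `L` uniform on `𝓛`) is a
family of two-universal hash functions if and only if for every `v ≠ 0`,
`|O(v) ∩ K_𝓘| / |O(v)| ≤ 1/∏_{i∈𝓘}|𝓢ᵢ|`, where `O(v)` is the orbit of `v`
under `𝓛` and `K_𝓘 = {v : vᵢ = 0 ∀ i ∈ 𝓘}` is the kernel of `α_𝓘`. -/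
theorem stmt_10
    (Fq : Type) [Field Fq] [Fintype Fq]
    (T : ℕ) (S : Fin (T + 1) → Type)
    [∀ i, AddCommGroup (S i)] [∀ i, Module Fq (S i)] [∀ i, Fintype (S i)]
    (I : Finset (Fin (T + 1))) (hI : I.Nonempty)
    (𝓛 : Subgroup ((∀ i, S i) ≃ₗ[Fq] (∀ i, S i))) :
    (∀ x₁ x₂ : ∀ i, S i, x₁ ≠ x₂ →
      (Nat.card {L : 𝓛 // ∀ i ∈ I,
          (L : (∀ i, S i) ≃ₗ[Fq] (∀ i, S i)) x₁ i
            = (L : (∀ i, S i) ≃ₗ[Fq] (∀ i, S i)) x₂ i} : ℝ) /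
        (Nat.card 𝓛 : ℝ)
      ≤ 1 / ∏ i ∈ I, (Fintype.card (S i) : ℝ))
    ↔ (∀ v : ∀ i, S i, v ≠ 0 →
      (({w | ∃ L ∈ 𝓛, L v = w} ∩ {w : ∀ i, S i | ∀ i ∈ I, w i = 0}).ncard : ℝ) /
        (({w | ∃ L ∈ 𝓛, L v = w} : Set (∀ i, S i)).ncard : ℝ)
      ≤ 1 / ∏ i ∈ I, (Fintype.card (S i) : ℝ)) := by
  classical
  haveI : Finite ((∀ i, S i) ≃ₗ[Fq] (∀ i, S i)) :=
    Finite.of_injective (fun e => (e : (∀ i, S i) → (∀ i, S i))) DFunLike.coe_injective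
  have horbit : ∀ v : ∀ i, S i,
      ({w | ∃ L ∈ 𝓛, L v = w} : Set (∀ i, S i)) = MulAction.orbit ↥𝓛 v := by
    intro v
    ext w
    constructor
    · rintro ⟨L, hL, h⟩
      exact ⟨⟨L, hL⟩, h⟩
    · rintro ⟨g, h⟩
      exact ⟨g.1, g.2, h⟩
  have hcount : ∀ x₁ x₂ : ∀ i, S i,
      Nat.card {L : 𝓛 // ∀ i ∈ I,
          (L : (∀ i, S i) ≃ₗ[Fq] (∀ i, S i)) x₁ i
            = (L : (∀ i, S i) ≃ₗ[Fq] (∀ i, S i)) x₂ i}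
        = Nat.card {g : ↥𝓛 // g • (x₁ - x₂) ∈ {w : ∀ i, S i | ∀ i ∈ I, w i = 0}} := by
    intro x₁ x₂
    refine Nat.card_congr (Equiv.subtypeEquivRight fun L => ?_)
    have hv : ∀ i, (L • (x₁ - x₂)) i
        = (L : (∀ i, S i) ≃ₗ[Fq] (∀ i, S i)) x₁ i
          - (L : (∀ i, S i) ≃ₗ[Fq] (∀ i, S i)) x₂ i := by
      intro i
      show ((L : (∀ i, S i) ≃ₗ[Fq] (∀ i, S i)) (x₁ - x₂)) i = _
      rw [map_sub]
      rfl
    constructor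
    · intro h i hi
      rw [hv i, h i hi, sub_self]
    · intro h i hi
      have := h i hi
      rw [hv i, sub_eq_zero] at this
      exact this
  have hmain : ∀ x₁ x₂ : ∀ i, S i,
      (Nat.card {L : 𝓛 // ∀ i ∈ I,
          (L : (∀ i, S i) ≃ₗ[Fq] (∀ i, S i)) x₁ i
            = (L : (∀ i, S i) ≃ₗ[Fq] (∀ i, S i)) x₂ i} : ℝ) / (Nat.card 𝓛 : ℝ)
      = (({w | ∃ L ∈ 𝓛, L (x₁ - x₂) = w} ∩ {w : ∀ i, S i | ∀ i ∈ I, w i = 0}).ncard : ℝ) /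
          (({w | ∃ L ∈ 𝓛, L (x₁ - x₂) = w} : Set (∀ i, S i)).ncard : ℝ) := by
    intro x₁ x₂
    rw [horbit (x₁ - x₂), hcount x₁ x₂, key_ratio]
  constructor
  · intro h v hv
    have h2 := h v 0 hv
    rw [hmain v 0] at h2
    simpa [sub_zero] using h2
  · intro h x₁ x₂ hx
    rw [hmain x₁ x₂]
    exact h (x₁ - x₂) (sub_ne_zero.mpr hx)
end
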